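/- arXiv:quant-ph/0010082 — 8 statements merged into one kernel-verified Lean document; each statement's English description precedes it below -/
import Mathlib

section
/- A nice error basis ρ : G → U(n) is irreducible as a projective representation: the only subspaces of ℂ^n invariant under all ρ(g) are {0} and ℂ^n. -/
open Matrix

theorem nice_error_basis_irreducible
    {G : Type} [Group G] [Fintype G] [DecidableEq G] {n : ℕ} (hn : 0 < n)
    (hcard : Fintype.card G = n ^ 2)
    (ρ : G → Matrix (Fin n) (Fin n) ℂ)
    (hunit : ∀ g, ρ g * (ρ g)ᴴ = 1)
    (hone : ρ 1 = 1)
    (htr : ∀ g : G, Matrix.trace (ρ g) = if g = 1 then (n : ℂ) else 0)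
    (ω : G → G → ℂ) (hω : ∀ g h, ω g h ≠ 0)
    (hproj : ∀ g h, ρ g * ρ h = ω g h • ρ (g * h)) :
    ∀ W : Submodule ℂ (Fin n → ℂ), (∀ g : G, ∀ v ∈ W, (ρ g).mulVec v ∈ W) → W = ⊥ ∨ W = ⊤ := by
  intro W hW
  -- conjugate transpose formula
  have hconj : ∀ h : G, (ρ h)ᴴ = (ω h h⁻¹)⁻¹ • ρ h⁻¹ := by
    intro h
    have h1 : ρ h * ((ω h h⁻¹)⁻¹ • ρ h⁻¹) = 1 := by
      rw [Matrix.mul_smul, hproj, mul_inv_cancel, hone, smul_smul,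
        inv_mul_cancel₀ (hω h h⁻¹), one_smul]
    rw [← Matrix.inv_eq_right_inv (hunit h), Matrix.inv_eq_right_inv h1]
  -- trace orthogonality
  have horth : ∀ g h : G, Matrix.trace (ρ g * (ρ h)ᴴ) =
      (ω h h⁻¹)⁻¹ * ω g h⁻¹ * (if g = h then (n : ℂ) else 0) := by
    intro g h
    rw [hconj, Matrix.mul_smul, hproj, smul_smul, Matrix.trace_smul, htr, smul_eq_mul]
    simp only [mul_inv_eq_one]
  -- linear independence of ρ
  have hli : LinearIndependent ℂ ρ := by
    rw [linearIndependent_iff']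
    intro s c hc h hs
    have key := congrArg (fun M => Matrix.trace (M * (ρ h)ᴴ)) hc
    simp only [Finset.sum_mul, Matrix.smul_mul, Matrix.trace_sum, Matrix.trace_smul,
      Matrix.zero_mul, Matrix.trace_zero, smul_eq_mul] at key
    rw [Finset.sum_eq_single h (fun g _ hgh => by rw [horth, if_neg hgh, mul_zero, mul_zero])
      (fun hh => absurd hs hh)] at key
    rw [horth, if_pos rfl, inv_mul_cancel₀ (hω h h⁻¹), one_mul] at key
    have hnne : (n : ℂ) ≠ 0 := Nat.cast_ne_zero.mpr hn.ne'
    rcases mul_eq_zero.mp key with h' | h'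
    · exact h'
    · exact absurd h' hnne
  -- span is everything
  have hspan : Submodule.span ℂ (Set.range ρ) = ⊤ := by
    apply hli.span_eq_top_of_card_eq_finrank
    rw [hcard, Module.finrank_matrix]
    simp [sq]
  -- W is invariant under every matrix
  have hWall : ∀ M : Matrix (Fin n) (Fin n) ℂ, ∀ v ∈ W, M.mulVec v ∈ W := by
    intro M v hv
    have hM : M ∈ Submodule.span ℂ (Set.range ρ) := hspan ▸ Submodule.mem_top
    induction hM using Submodule.span_induction with
    | mem x hx => obtain ⟨g, rfl⟩ := hx; exact hW g v hv
    | zero => rw [Matrix.zero_mulVec]; exact W.zero_mem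
    | add x y _ _ hx hy => simpa [Matrix.add_mulVec] using W.add_mem hx hy
    | smul a x _ hx => simpa [Matrix.smul_mulVec] using W.smul_mem a hx
  by_cases hbot : W = ⊥
  · exact Or.inl hbot
  right
  obtain ⟨v, hvW, hv0⟩ := Submodule.ne_bot_iff W |>.mp hbot
  obtain ⟨j, hj⟩ : ∃ j, v j ≠ 0 := by
    by_contra hno
    push_neg at hno
    exact hv0 (funext hno)
  have hsingle : ∀ i, Pi.single i (1 : ℂ) ∈ W := by
    intro i
    have hm := hWall (Matrix.single i j ((v j)⁻¹)) v hvW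
    have : (Matrix.single i j ((v j)⁻¹)).mulVec v = Pi.single i (1 : ℂ) := by
      rw [Matrix.single_mulVec, inv_mul_cancel₀ hj]
      rfl
    rwa [this] at hm
  rw [eq_top_iff]
  intro x _
  have hx : x = ∑ i, x i • (Pi.single i 1 : Fin n → ℂ) := by
    funext k
    simp [Pi.single_apply, Finset.sum_ite_eq']
  rw [hx]
  exact W.sum_mem fun i _ => W.smul_mem _ (hsingle i)
end

section
/- Let G be a finite group and ρ : G → U(n) a map parametrizing a set of unitary matrices. Then {ρ(g) : g ∈ G} is a nice error basis with index group G if and only if ρ is a unitary irreducible faithful projective representation of G of degree |G|^{1/2}. -/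
open Matrix

theorem nice_error_basis_iff_irred_faithful_projective
    {G : Type} [Group G] [Fintype G] [DecidableEq G] {n : ℕ} (hn : 0 < n)
    (ρ : G → Matrix (Fin n) (Fin n) ℂ)
    (hunit : ∀ g, ρ g * (ρ g)ᴴ = 1)
    (hone : ρ 1 = 1)
    (ω : G → G → ℂ) (hω : ∀ g h, ω g h ≠ 0)
    (hproj : ∀ g h, ρ g * ρ h = ω g h • ρ (g * h)) :
    (Fintype.card G = n ^ 2 ∧
      ∀ g : G, Matrix.trace (ρ g) = if g = 1 then (n : ℂ) else 0) ↔
    (Fintype.card G = n ^ 2 ∧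
      (∀ (g : G) (c : ℂ), ρ g = c • (1 : Matrix (Fin n) (Fin n) ℂ) → g = 1) ∧
      (∀ W : Submodule ℂ (Fin n → ℂ),
        (∀ g : G, ∀ v ∈ W, (ρ g).mulVec v ∈ W) → W = ⊥ ∨ W = ⊤)) := by
  have hn0 : (n : ℂ) ≠ 0 := Nat.cast_ne_zero.mpr hn.ne'
  have hunit' : ∀ g, (ρ g)ᴴ * ρ g = 1 := fun g => mul_eq_one_comm.mp (hunit g)
  have hinv : ∀ g : G, ρ g * ((ω g g⁻¹)⁻¹ • ρ g⁻¹) = 1 := by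
    intro g
    rw [Matrix.mul_smul, hproj, mul_inv_cancel, hone, smul_smul,
      inv_mul_cancel₀ (hω g g⁻¹), one_smul]
  have hH : ∀ g : G, (ρ g)ᴴ = (ω g g⁻¹)⁻¹ • ρ g⁻¹ := by
    intro g
    calc (ρ g)ᴴ = (ρ g)ᴴ * (ρ g * ((ω g g⁻¹)⁻¹ • ρ g⁻¹)) := by rw [hinv g, mul_one]
    _ = ((ρ g)ᴴ * ρ g) * ((ω g g⁻¹)⁻¹ • ρ g⁻¹) := by rw [mul_assoc]
    _ = (ω g g⁻¹)⁻¹ • ρ g⁻¹ := by rw [hunit', one_mul]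
  have i0 : Fin n := ⟨0, hn⟩
  haveI : Nonempty (Fin n) := ⟨i0⟩
  have hsc : ∀ c d : ℂ, c • (1 : Matrix (Fin n) (Fin n) ℂ) = d • 1 → c = d := by
    intro c d hcd
    have := congrFun (congrFun hcd i0) i0
    simpa [Matrix.one_apply] using this
  have hωu : ∀ g h : G, star (ω g h) * ω g h = 1 := by
    intro g h
    have h1 : (ρ g * ρ h)ᴴ * (ρ g * ρ h) = 1 := by
      rw [conjTranspose_mul, mul_assoc, ← mul_assoc (ρ g)ᴴ, hunit' g, one_mul, hunit' h]
    have h2 : (ρ g * ρ h)ᴴ * (ρ g * ρ h)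
        = (star (ω g h) * ω g h) • (1 : Matrix (Fin n) (Fin n) ℂ) := by
      rw [hproj, conjTranspose_smul, smul_mul_assoc, mul_smul_comm, hunit', smul_smul]
    exact hsc (star (ω g h) * ω g h) 1 (by rw [← h2, h1, one_smul])
  constructor
  · -- forward direction
    rintro ⟨hcard, htr⟩
    refine ⟨hcard, ?_, ?_⟩
    · -- faithfulness
      intro g c hgc
      by_contra hg1
      have h0 := htr g
      rw [if_neg hg1, hgc] at h0
      have hc : c = 0 := by
        have hcn : c * (n : ℂ) = 0 := by
          simpa [Matrix.trace_smul, Fintype.card_fin] using h0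
        exact (mul_eq_zero.mp hcn).resolve_right hn0
      have h1 := hunit g
      rw [hgc, hc, zero_smul, Matrix.zero_mul] at h1
      have h2 := congrFun (congrFun h1 i0) i0
      simp [Matrix.one_apply] at h2
    · -- irreducibility
      have horth0 : ∀ g k : G, g ≠ k → Matrix.trace ((ρ k)ᴴ * ρ g) = 0 := by
        intro g k hgk
        rw [hH k, smul_mul_assoc, hproj, Matrix.trace_smul, Matrix.trace_smul, htr,
          if_neg (fun h => hgk (inv_mul_eq_one.mp h).symm), smul_zero, smul_zero]
      have hli : LinearIndependent ℂ ρ := by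
        rw [Fintype.linearIndependent_iff]
        intro c hc k
        have h1 := congrArg (fun X => Matrix.trace ((ρ k)ᴴ * X)) hc
        simp only [Matrix.mul_sum, Matrix.mul_smul, Matrix.trace_sum, Matrix.trace_smul,
          Matrix.mul_zero, Matrix.trace_zero] at h1
        rw [Finset.sum_eq_single k (fun g _ hgk => by rw [horth0 g k hgk, smul_zero])
          (fun h => absurd (Finset.mem_univ k) h)] at h1
        rw [hunit' k, Matrix.trace_one] at h1
        simp only [Fintype.card_fin, smul_eq_mul] at h1
        exact (mul_eq_zero.mp h1).resolve_right hn0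
      have hspan : Submodule.span ℂ (Set.range ρ) = ⊤ := by
        apply hli.span_eq_top_of_card_eq_finrank'
        rw [hcard, Module.finrank_matrix]
        simp [Fintype.card_fin, sq]
      intro W hW
      rcases eq_or_ne W ⊥ with h | h
      · exact Or.inl h
      right
      obtain ⟨v, hvW, hv0⟩ := Submodule.exists_mem_ne_zero_of_ne_bot h
      have hmul : ∀ B : Matrix (Fin n) (Fin n) ℂ, B.mulVec v ∈ W := by
        intro B
        have hB : B ∈ Submodule.span ℂ (Set.range ρ) := hspan ▸ Submodule.mem_top
        induction hB using Submodule.span_induction with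
        | mem x hx => obtain ⟨g, rfl⟩ := hx; exact hW g v hvW
        | zero => simpa [Matrix.zero_mulVec] using W.zero_mem
        | add x y hx hy ihx ihy => simpa [Matrix.add_mulVec] using W.add_mem ihx ihy
        | smul c x hx ih => simpa [Matrix.smul_mulVec] using W.smul_mem c ih
      rw [eq_top_iff]
      rintro w -
      obtain ⟨i, hi⟩ : ∃ i, v i ≠ 0 := by
        by_contra hcon; push_neg at hcon; exact hv0 (funext hcon)
      have hBv : (Matrix.of fun a b => if b = i then w a * (v i)⁻¹ else 0).mulVec v = w := by
        ext a
        simp only [Matrix.mulVec, dotProduct, Matrix.of_apply, ite_mul, zero_mul]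
        rw [Finset.sum_ite_eq' Finset.univ i fun b => w a * (v i)⁻¹ * v b]
        simp [mul_assoc, inv_mul_cancel₀ hi]
      exact hBv ▸ hmul _
  · -- reverse direction
    rintro ⟨hcard, -, hirr⟩
    refine ⟨hcard, ?_⟩
    intro g
    rcases eq_or_ne g 1 with rfl | hg
    · rw [if_pos rfl, hone, Matrix.trace_one]
      simp [Fintype.card_fin]
    rw [if_neg hg]
    -- Schur's lemma
    have hschur : ∀ T : Matrix (Fin n) (Fin n) ℂ,
        (∀ k, ρ k * T = T * ρ k) → ∃ c : ℂ, T = c • 1 := by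
      intro T hT
      obtain ⟨c, hc⟩ := Module.End.exists_eigenvalue (Matrix.mulVecLin T)
      refine ⟨c, ?_⟩
      have hWinv : ∀ k : G, ∀ v ∈ Module.End.eigenspace (Matrix.mulVecLin T) c,
          (ρ k).mulVec v ∈ Module.End.eigenspace (Matrix.mulVecLin T) c := by
        intro k v hv
        rw [Module.End.mem_eigenspace_iff] at hv ⊢
        rw [Matrix.mulVecLin_apply] at hv ⊢
        rw [Matrix.mulVec_mulVec, ← hT k, ← Matrix.mulVec_mulVec, hv, Matrix.mulVec_smul]
      rcases hirr _ hWinv with hbot | htop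
      · exact absurd hbot hc
      · apply Matrix.ext
        intro a b
        have hv : (Pi.single b 1 : Fin n → ℂ) ∈ Module.End.eigenspace (Matrix.mulVecLin T) c :=
          htop ▸ Submodule.mem_top
        rw [Module.End.mem_eigenspace_iff, Matrix.mulVecLin_apply] at hv
        have hvc := congrFun hv a
        simpa [Matrix.mulVec_single, Pi.single_apply, Matrix.one_apply, eq_comm,
          Matrix.smul_apply, smul_eq_mul] using hvc
    -- averaging identity
    have havg : ∀ X : Matrix (Fin n) (Fin n) ℂ,
        ∑ h : G, (ρ h)ᴴ * X * ρ h = ((n : ℂ) * Matrix.trace X) • 1 := by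
      intro X
      have hterm : ∀ h k : G, (ρ k)ᴴ * ((ρ h)ᴴ * X * ρ h) * ρ k
          = (ρ (h * k))ᴴ * X * ρ (h * k) := by
        intro h k
        calc (ρ k)ᴴ * ((ρ h)ᴴ * X * ρ h) * ρ k
            = (ρ h * ρ k)ᴴ * X * (ρ h * ρ k) := by
              simp only [conjTranspose_mul, Matrix.mul_assoc]
          _ = (ω h k • ρ (h * k))ᴴ * X * (ω h k • ρ (h * k)) := by rw [hproj]
          _ = (star (ω h k) * ω h k) • ((ρ (h * k))ᴴ * X * ρ (h * k)) := by
              rw [conjTranspose_smul, smul_mul_assoc, smul_mul_assoc, mul_smul_comm, smul_smul]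
          _ = (ρ (h * k))ᴴ * X * ρ (h * k) := by rw [hωu, one_smul]
      set T := ∑ h : G, (ρ h)ᴴ * X * ρ h with hT
      have hTconj : ∀ k, (ρ k)ᴴ * T * ρ k = T := by
        intro k
        calc (ρ k)ᴴ * T * ρ k = ∑ h : G, (ρ k)ᴴ * ((ρ h)ᴴ * X * ρ h) * ρ k := by
              rw [hT, Finset.mul_sum, Finset.sum_mul]
          _ = ∑ h : G, (ρ (h * k))ᴴ * X * ρ (h * k) :=
              Finset.sum_congr rfl fun h _ => hterm h k
          _ = T := Fintype.sum_equiv (Equiv.mulRight k) _ _ (fun h => rfl)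
      have hcomm : ∀ k, ρ k * T = T * ρ k := by
        intro k
        conv_lhs => rw [← hTconj k]
        rw [← Matrix.mul_assoc, ← Matrix.mul_assoc, hunit k, Matrix.one_mul]
      obtain ⟨c, hc⟩ := hschur T hcomm
      have ht1 : Matrix.trace T = ((n : ℂ) ^ 2) * Matrix.trace X := by
        rw [hT, Matrix.trace_sum,
          Finset.sum_congr rfl fun h _ => by
            rw [Matrix.trace_mul_cycle, hunit, Matrix.one_mul]]
        rw [Finset.sum_const, Finset.card_univ, hcard]
        push_cast
        ring
      have ht2 : Matrix.trace T = c * n := by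
        rw [hc, Matrix.trace_smul, Matrix.trace_one]
        simp [Fintype.card_fin, mul_comm]
      have hcval : c = (n : ℂ) * Matrix.trace X := by
        apply mul_right_cancel₀ hn0
        rw [← ht2, ht1]; ring
      rw [hc, hcval]
    -- entrywise Schur orthogonality
    have hent : ∀ i j a b : Fin n, (∑ h : G, star (ρ h i a) * ρ h j b)
        = (n : ℂ) * ((if i = j then 1 else 0) * if a = b then 1 else 0) := by
      intro i j a b
      have h1 := congrFun (congrFun (havg (Matrix.single i j 1)) a) b
      rw [Matrix.sum_apply] at h1
      rw [Finset.sum_congr rfl (fun h (_ : h ∈ Finset.univ) => by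
        show ((ρ h)ᴴ * Matrix.single i j 1 * ρ h : Matrix (Fin n) (Fin n) ℂ) a b
          = star (ρ h i a) * ρ h j b
        simp [Matrix.mul_apply, Matrix.single, Matrix.conjTranspose_apply,
          ite_and, mul_ite, ite_mul, mul_zero, zero_mul, mul_one, Finset.sum_ite_eq,
          Finset.sum_ite_eq'])] at h1
      have htr : Matrix.trace (Matrix.single i j (1:ℂ)) = if i = j then 1 else 0 := by
        by_cases hij : i = j
        · subst hij; simp [Matrix.trace_single_eq_same]
        · rw [Matrix.trace_single_eq_of_ne i j (1:ℂ) hij, if_neg hij]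
      rw [h1, htr]
      simp only [Matrix.smul_apply, Matrix.one_apply, smul_eq_mul]
      by_cases hij : i = j <;> by_cases hab : a = b <;> simp [hij, hab]
    -- entry functions form a basis of ℂ^G
    set e : Fin n × Fin n → (G → ℂ) := fun p h => ρ h p.1 p.2 with he
    have hliE : LinearIndependent ℂ e := by
      rw [Fintype.linearIndependent_iff]
      intro c hc p
      have hc' : ∀ h : G, (∑ q : Fin n × Fin n, c q * ρ h q.1 q.2) = 0 := by
        intro h
        have := congrFun hc h
        simpa [he, Finset.sum_apply] using this
      have h0 : (∑ h : G, star (ρ h p.1 p.2) * ∑ q : Fin n × Fin n, c q * ρ h q.1 q.2) = 0 := by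
        simp [hc']
      have h1 : (∑ q : Fin n × Fin n, c q * ∑ h : G, star (ρ h p.1 p.2) * ρ h q.1 q.2) = 0 := by
        rw [← h0]
        rw [Finset.sum_congr rfl (fun q (_ : q ∈ Finset.univ) => Finset.mul_sum _ _ _)]
        rw [Finset.sum_comm]
        refine Finset.sum_congr rfl fun h _ => ?_
        rw [Finset.mul_sum]
        exact Finset.sum_congr rfl fun q _ => by ring
      rw [Finset.sum_congr rfl (fun q (_ : q ∈ Finset.univ) =>
        by rw [hent p.1 q.1 p.2 q.2])] at h1
      rw [Finset.sum_eq_single p ?_ (fun hh => absurd (Finset.mem_univ p) hh)] at h1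
      · simp [hn.ne'] at h1
        exact h1
      · intro q _ hq
        by_cases h1 : p.1 = q.1
        · have h2 : ¬ p.2 = q.2 := fun hv => hq (Prod.ext h1 hv).symm
          simp [h1, h2]
        · simp [h1]
    have hspanE : Submodule.span ℂ (Set.range e) = ⊤ := by
      apply hliE.span_eq_top_of_card_eq_finrank'
      rw [Module.finrank_pi, hcard]
      simp [sq]
    obtain ⟨A, hA⟩ := Submodule.mem_span_range_iff_exists_fun ℂ |>.mp
      (hspanE ▸ Submodule.mem_top : (fun k : G => if k = 1 then (1:ℂ) else 0) ∈ _)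
    have hA' : ∀ k : G, (∑ q : Fin n × Fin n, A q * ρ k q.1 q.2)
        = if k = 1 then (1:ℂ) else 0 := by
      intro k
      have := congrFun hA k
      simpa [he, Finset.sum_apply] using this
    -- conjugation term formula
    set μ : G → ℂ := fun h => (ω h h⁻¹)⁻¹ * ω h⁻¹ g * ω (h⁻¹ * g) h with hμ
    have hterm : ∀ h : G, (ρ h)ᴴ * ρ g * ρ h = μ h • ρ (h⁻¹ * g * h) := by
      intro h
      rw [hH h, smul_mul_assoc, smul_mul_assoc, hproj h⁻¹ g, smul_mul_assoc,
        hproj (h⁻¹ * g) h, smul_smul, smul_smul, hμ]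
    have hconj1 : ∀ h : G, h⁻¹ * g * h ≠ 1 := by
      intro h hh
      apply hg
      have h2 : g = h * (h⁻¹ * g * h) * h⁻¹ := by group
      rw [h2, hh]
      group
    have hkey : ∑ h : G, μ h • ρ (h⁻¹ * g * h)
        = ((n : ℂ) * Matrix.trace (ρ g)) • ρ 1 := by
      rw [hone, ← havg (ρ g)]
      exact Finset.sum_congr rfl fun h _ => (hterm h).symm
    have hzero : (0 : ℂ) = (n : ℂ) * Matrix.trace (ρ g) := by
      calc (0 : ℂ) = ∑ h : G, μ h * (if h⁻¹ * g * h = 1 then (1:ℂ) else 0) := by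
            rw [Finset.sum_congr rfl fun h (_ : h ∈ Finset.univ) =>
              by rw [if_neg (hconj1 h), mul_zero]]
            simp
        _ = ∑ h : G, μ h * ∑ q : Fin n × Fin n, A q * ρ (h⁻¹ * g * h) q.1 q.2 := by
            exact Finset.sum_congr rfl fun h _ => by rw [hA' (h⁻¹ * g * h)]
        _ = ∑ q : Fin n × Fin n, A q * (∑ h : G, μ h • ρ (h⁻¹ * g * h)) q.1 q.2 := by
            rw [Finset.sum_congr rfl (fun q (_ : q ∈ (Finset.univ : Finset (Fin n × Fin n))) => by
              rw [Matrix.sum_apply, Finset.mul_sum])]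
            rw [Finset.sum_comm]
            refine Finset.sum_congr rfl fun h _ => ?_
            rw [Finset.mul_sum]
            exact Finset.sum_congr rfl fun q _ => by
              rw [Matrix.smul_apply, smul_eq_mul]; ring
        _ = ∑ q : Fin n × Fin n, A q * (((n : ℂ) * Matrix.trace (ρ g)) • ρ 1) q.1 q.2 := by
            rw [hkey]
        _ = ((n : ℂ) * Matrix.trace (ρ g)) * ∑ q : Fin n × Fin n, A q * ρ 1 q.1 q.2 := by
            rw [Finset.mul_sum]
            exact Finset.sum_congr rfl fun q _ => by
              rw [Matrix.smul_apply, smul_eq_mul]; ring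
        _ = (n : ℂ) * Matrix.trace (ρ g) := by rw [hA' 1, if_pos rfl, mul_one]
    exact ((mul_eq_zero.mp hzero.symm).resolve_left hn0)
end

section
/- If a finite abelian group G admits a faithful irreducible projective complex representation, then G is of symmetric type, i.e., G ≅ H × H for some finite abelian group H. -/
open Matrix

theorem symplectic_structure (n : ℕ) : ∀ (G : Type) [CommGroup G] [Fintype G],
    Fintype.card G = n → ∀ β : G → G → ℂˣ,
    (∀ a b c : G, β (a*b) c = β a c * β b c) →
    (∀ a b : G, β a b * β b a = 1) →
    (∀ a : G, β a a = 1) →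
    (∀ a : G, (∀ b : G, β a b = 1) → a = 1) →
    ∃ (H : Type) (_ : CommGroup H) (_ : Fintype H), Nonempty (G ≃* H × H) := by
  induction n using Nat.strong_induction_on with
  | _ n IH =>
  intro G _ _ hcard β hmul hskew halt hnd
  by_cases htriv : ∀ x : G, x = 1
  · haveI : Unique G := ⟨⟨1⟩, htriv⟩
    haveI : Unique (PUnit.{1} × PUnit.{1}) := ⟨⟨(⟨⟩,⟨⟩)⟩, fun _ => rfl⟩
    exact ⟨PUnit, inferInstance, inferInstance, ⟨MulEquiv.ofUnique⟩⟩
  haveI : Nontrivial G := by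
    push_neg at htriv; obtain ⟨x, hx⟩ := htriv; exact ⟨x, 1, hx⟩
  have hinv : ∀ a b : G, β a b = (β b a)⁻¹ := fun a b =>
    eq_inv_of_mul_eq_one_left (hskew a b)
  set e := Monoid.exponent G with he
  have he1 : 1 < e := Monoid.one_lt_exponent
  haveI : NeZero e := ⟨by omega⟩
  obtain ⟨g, hg⟩ := Monoid.exists_orderOf_eq_exponent (Monoid.ExponentExists.of_finite (G := G))
  let φ : G → G →* ℂˣ := fun c => MonoidHom.mk' (fun x => β x c) (fun a b => hmul a b c)
  have hmul2 : ∀ (x a b : G), β x (a*b) = β x a * β x b := by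
    intro x a b
    rw [hinv x (a*b), hmul, mul_inv, ← hinv x a, ← hinv x b]
  let ψ : G → G →* ℂˣ := fun x => MonoidHom.mk' (β x) (hmul2 x)
  have hβpow1 : ∀ (x c : G) (k : ℕ), β (x^k) c = (β x c)^k := fun x c k => map_pow (φ c) x k
  have hβpow2 : ∀ (x c : G) (k : ℕ), β x (c^k) = (β x c)^k := fun x c k => map_pow (ψ x) c k
  have hβone1 : ∀ c : G, β 1 c = 1 := fun c => map_one (φ c)
  have hβone2 : ∀ x : G, β x 1 = 1 := fun x => map_one (ψ x)
  -- find h with orderOf (β g h) = e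
  obtain ⟨h, hζ⟩ : ∃ h : G, orderOf (β g h) = e := by
    haveI : Finite (ψ g).range := Set.Finite.to_subtype (Set.finite_range _)
    haveI : IsCyclic (ψ g).range := subgroup_units_cyclic _
    obtain ⟨ζ', hζ'⟩ := IsCyclic.exists_generator (α := (ψ g).range)
    obtain ⟨h, hh⟩ := ζ'.2
    refine ⟨h, ?_⟩
    have hcoe : ((ζ' : ℂˣ)) = β g h := by rw [← hh]; rfl
    set k := orderOf (β g h) with hk
    have hk_dvd : k ∣ e := orderOf_dvd_of_pow_eq_one
      (by rw [← hβpow2, Monoid.pow_exponent_eq_one, hβone2])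
    have hζ'k : ζ' ^ k = 1 := by
      have ho : orderOf (ζ' : ℂˣ) = orderOf ζ' :=
        orderOf_injective ((ψ g).range.subtype) (Subgroup.subtype_injective _) ζ'
      have : orderOf ζ' = k := by rw [← ho, hcoe]
      rw [← this]; exact pow_orderOf_eq_one ζ'
    have he_dvd : e ∣ k := by
      rw [he, ← hg]
      apply orderOf_dvd_of_pow_eq_one
      apply hnd
      intro b
      have hmem : β g b ∈ (ψ g).range := ⟨b, rfl⟩
      obtain ⟨m, hm⟩ := hζ' ⟨β g b, hmem⟩
      rw [hβpow1]
      have : (⟨β g b, hmem⟩ : (ψ g).range) ^ k = 1 := by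
        rw [← hm, ← zpow_natCast, ← _root_.zpow_mul, mul_comm, _root_.zpow_mul, zpow_natCast, hζ'k, _root_.one_zpow]
      have := congrArg (Subgroup.subtype _) this
      simpa using this
    exact Nat.dvd_antisymm hk_dvd he_dvd
  set ζ := β g h with hζdef
  -- every e-th root of unity is a power of ζ
  have hgen : ∀ u : ℂˣ, u ^ e = 1 → u ∈ Subgroup.zpowers ζ := by
    intro u hu
    have hle : Subgroup.zpowers ζ ≤ rootsOfUnity e ℂ := by
      rw [Subgroup.zpowers_le, mem_rootsOfUnity, ← hζ]
      exact pow_orderOf_eq_one ζ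
    have hcards : Nat.card (rootsOfUnity e ℂ) ≤ Nat.card (Subgroup.zpowers ζ) := by
      rw [Nat.card_zpowers, hζ, Complex.card_rootsOfUnity]
    rw [Subgroup.eq_of_le_of_card_ge hle hcards, mem_rootsOfUnity]
    exact hu
  have hroot1 : ∀ x : G, (β x h) ^ e = 1 := fun x => by
    rw [← hβpow1, Monoid.pow_exponent_eq_one, hβone1]
  have hroot2 : ∀ x : G, (β g x) ^ e = 1 := fun x => by
    rw [← hβpow2, Monoid.pow_exponent_eq_one, hβone2]
  have hzpow_inj : ∀ c c' : ZMod e, ζ ^ c.val = ζ ^ c'.val → c = c' := by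
    intro c c' hcc
    rw [pow_eq_pow_iff_modEq, hζ, Nat.ModEq,
      Nat.mod_eq_of_lt (ZMod.val_lt c), Nat.mod_eq_of_lt (ZMod.val_lt c')] at hcc
    exact ZMod.val_injective e hcc
  have hdlog : ∀ u : ℂˣ, u ^ e = 1 → ∃ c : ZMod e, ζ ^ c.val = u := by
    intro u hu
    obtain ⟨m, hm⟩ := Subgroup.mem_zpowers_iff.mp (hgen u hu)
    refine ⟨(m : ZMod e), ?_⟩
    rw [← hm]
    have hmod : (((m : ZMod e).val : ℤ)) ≡ m [ZMOD e] := by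
      rw [← ZMod.intCast_eq_intCast_iff]
      push_cast
      simp [ZMod.natCast_val, ZMod.cast_id]
    calc ζ ^ (m : ZMod e).val = ζ ^ (((m : ZMod e).val : ℤ)) := (zpow_natCast _ _).symm
      _ = ζ ^ m := by rw [zpow_eq_zpow_iff_modEq, hζ]; exact hmod
  set A : G → ZMod e := fun x => (hdlog _ (hroot1 x)).choose with hA
  set B : G → ZMod e := fun x => (hdlog _ (hroot2 x)).choose with hB
  have hA_spec : ∀ x : G, ζ ^ (A x).val = β x h := fun x => (hdlog _ (hroot1 x)).choose_spec
  have hB_spec : ∀ x : G, ζ ^ (B x).val = β g x := fun x => (hdlog _ (hroot2 x)).choose_spec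
  have hA_unique : ∀ (x : G) (c : ZMod e), ζ ^ c.val = β x h → A x = c := fun x c hc =>
    hzpow_inj _ _ (by rw [hA_spec, hc])
  have hB_unique : ∀ (x : G) (c : ZMod e), ζ ^ c.val = β g x → B x = c := fun x c hc =>
    hzpow_inj _ _ (by rw [hB_spec, hc])
  have hpow_add : ∀ c c' : ZMod e, ζ ^ (c + c').val = ζ ^ c.val * ζ ^ c'.val := by
    intro c c'
    rw [← pow_add, pow_eq_pow_iff_modEq, hζ]
    show _ % _ = _ % _
    rw [ZMod.val_add]
    exact Nat.mod_mod_of_dvd _ dvd_rfl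
  have hA_add : ∀ x y : G, A (x*y) = A x + A y := fun x y =>
    hA_unique _ _ (by rw [hpow_add, hA_spec, hA_spec, ← hmul])
  have hB_add : ∀ x y : G, B (x*y) = B x + B y := fun x y =>
    hB_unique _ _ (by rw [hpow_add, hB_spec, hB_spec, ← hmul2])
  set s : ZMod e × ZMod e → G := fun p => g ^ p.1.val * h ^ p.2.val with hs
  have hpow_add_G : ∀ (x : G) (c c' : ZMod e), x ^ (c + c').val = x ^ c.val * x ^ c'.val := by
    intro x c c'
    rw [← pow_add, pow_eq_pow_iff_modEq]
    refine Nat.ModEq.of_dvd (Monoid.order_dvd_exponent x) ?_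
    show _ % _ = _ % _
    rw [ZMod.val_add]
    exact Nat.mod_mod_of_dvd _ dvd_rfl
  have hs_mul : ∀ p q, s (p + q) = s p * s q := by
    intro p q
    simp only [hs, Prod.fst_add, Prod.snd_add, hpow_add_G]
    rw [mul_mul_mul_comm]
  have hβs1 : ∀ p : ZMod e × ZMod e, β (s p) h = ζ ^ p.1.val := by
    intro p
    simp only [hs]
    rw [hmul, hβpow1, hβpow1, halt, one_pow, mul_one]
  have hβs2 : ∀ p : ZMod e × ZMod e, β g (s p) = ζ ^ p.2.val := by
    intro p
    simp only [hs]
    rw [hmul2, hβpow2, hβpow2, halt, one_pow, one_mul]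
  have hA_s : ∀ p, A (s p) = p.1 := fun p => hA_unique _ _ (hβs1 p).symm
  have hB_s : ∀ p, B (s p) = p.2 := fun p => hB_unique _ _ (hβs2 p).symm
  set K : Subgroup G := (ψ g).ker ⊓ (φ h).ker with hK
  have hKmem : ∀ x : G, x ∈ K ↔ β g x = 1 ∧ β x h = 1 := by
    intro x
    simp only [hK, Subgroup.mem_inf, MonoidHom.mem_ker, ψ, φ]
    exact Iff.rfl
  have hA_K : ∀ x : G, x ∈ K → A x = 0 := by
    intro x hx
    apply hA_unique
    rw [((hKmem x).mp hx).2, ZMod.val_zero, pow_zero]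
  have hB_K : ∀ x : G, x ∈ K → B x = 0 := by
    intro x hx
    apply hB_unique
    rw [((hKmem x).mp hx).1, ZMod.val_zero, pow_zero]
  have hmemK : ∀ x : G, x * (s (A x, B x))⁻¹ ∈ K := by
    intro x
    rw [hKmem]
    constructor
    · rw [hmul2, show β g (s (A x, B x))⁻¹ = (β g (s (A x, B x)))⁻¹ from map_inv (ψ g) _,
        hβs2, hB_spec]
      exact mul_inv_cancel _
    · rw [hmul, show β (s (A x, B x))⁻¹ h = (β (s (A x, B x)) h)⁻¹ from map_inv (φ h) _,
        hβs1, hA_spec]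
      exact mul_inv_cancel _
  let F : G ≃* K × (Multiplicative (ZMod e) × Multiplicative (ZMod e)) :=
    { toFun := fun x => (⟨x * (s (A x, B x))⁻¹, hmemK x⟩,
        (Multiplicative.ofAdd (A x), Multiplicative.ofAdd (B x))),
      invFun := fun kp => (kp.1 : G) * s (kp.2.1.toAdd, kp.2.2.toAdd),
      left_inv := by
        intro x
        show x * (s (A x, B x))⁻¹ * s (A x, B x) = x
        rw [inv_mul_cancel_right]
      right_inv := by
        intro kp
        obtain ⟨⟨k, hk⟩, p⟩ := kp
        have hA0 : A (k * s (p.1.toAdd, p.2.toAdd)) = p.1.toAdd := by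
          rw [hA_add, hA_K k hk, hA_s, zero_add]
        have hB0 : B (k * s (p.1.toAdd, p.2.toAdd)) = p.2.toAdd := by
          rw [hB_add, hB_K k hk, hB_s, zero_add]
        refine Prod.ext ?_ ?_
        · apply Subtype.ext
          show k * s (p.1.toAdd, p.2.toAdd) * (s (_, _))⁻¹ = k
          rw [hA0, hB0, mul_inv_cancel_right]
        · show (Multiplicative.ofAdd _, Multiplicative.ofAdd _) = p
          rw [hA0, hB0]
          exact Prod.mk.eta
      map_mul' := by
        intro x y
        refine Prod.ext ?_ ?_
        · apply Subtype.ext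
          show x * y * (s (A (x*y), B (x*y)))⁻¹ =
            (x * (s (A x, B x))⁻¹) * (y * (s (A y, B y))⁻¹)
          rw [hA_add, hB_add,
            show ((A x + A y, B x + B y) : ZMod e × ZMod e) = (A x, B x) + (A y, B y) from rfl,
            hs_mul, mul_inv]
          exact mul_mul_mul_comm x y _ _
        · show (Multiplicative.ofAdd (A (x*y)), Multiplicative.ofAdd (B (x*y))) = _
          rw [hA_add, hB_add, ofAdd_add, ofAdd_add]
          rfl }
  haveI : Fintype K := Fintype.ofFinite K
  have hcard2 : n = Fintype.card K * (Fintype.card (Multiplicative (ZMod e)) *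
      Fintype.card (Multiplicative (ZMod e))) := by
    rw [← hcard, Fintype.card_congr F.toEquiv, Fintype.card_prod, Fintype.card_prod]
  have hcardM : Fintype.card (Multiplicative (ZMod e)) = e := by
    simp [ZMod.card]
  have hKlt : Fintype.card K < n := by
    have hpos : 0 < Fintype.card K := Fintype.card_pos
    rw [hcard2, hcardM]
    exact (Nat.lt_mul_iff_one_lt_right hpos).mpr (by nlinarith)
  obtain ⟨H', hCG, hFT, ⟨EK⟩⟩ := IH (Fintype.card K) hKlt K rfl (fun a b => β a b)
    (fun a b c => hmul a b c) (fun a b => hskew a b) (fun a => halt a)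
    (by
      intro a ha
      apply Subtype.ext
      apply hnd
      intro z
      have hz : z = (z * (s (A z, B z))⁻¹) * s (A z, B z) := by
        rw [inv_mul_cancel_right]
      rw [hz, hmul2 (a : G)]
      have h1 : β (a : G) (z * (s (A z, B z))⁻¹) = 1 := ha ⟨_, hmemK z⟩
      rw [h1, one_mul, show s (A z, B z) = g ^ (A z).val * h ^ (B z).val from rfl,
        hmul2, hβpow2, hβpow2]
      have hag : β (a : G) g = 1 := by
        rw [hinv, ((hKmem _).mp a.2).1, inv_one]
      have hah : β (a : G) h = 1 := ((hKmem _).mp a.2).2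
      rw [hag, hah, one_pow, one_pow, one_mul])
  refine ⟨H' × Multiplicative (ZMod e), inferInstance, inferInstance, ⟨?_⟩⟩
  exact F.trans ((EK.prodCongr (MulEquiv.refl _)).trans
    (MulEquiv.prodProdProdComm H' H' (Multiplicative (ZMod e)) (Multiplicative (ZMod e))))

theorem abelian_with_faithful_irred_projective_is_symmetric_type
    {G : Type} [CommGroup G] [Fintype G] {d : ℕ} (hd : 0 < d)
    (ρ : G → Matrix (Fin d) (Fin d) ℂ)
    (hinv : ∀ g, IsUnit (ρ g))
    (hone : ρ 1 = 1)
    (ω : G → G → ℂ) (hω : ∀ g h, ω g h ≠ 0)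
    (hproj : ∀ g h, ρ g * ρ h = ω g h • ρ (g * h))
    (hfaith : ∀ (g : G) (c : ℂ), ρ g = c • (1 : Matrix (Fin d) (Fin d) ℂ) → g = 1)
    (hirr : ∀ W : Submodule ℂ (Fin d → ℂ),
      (∀ g : G, ∀ v ∈ W, (ρ g).mulVec v ∈ W) → W = ⊥ ∨ W = ⊤) :
    ∃ (H : Type) (_ : CommGroup H) (_ : Fintype H), Nonempty (G ≃* H × H) := by
  haveI : Nonempty (Fin d) := ⟨⟨0, hd⟩⟩
  have hρne : ∀ x : G, ρ x ≠ 0 := by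
    intro x hx
    have h0 : IsUnit (0 : Matrix (Fin d) (Fin d) ℂ) := hx ▸ hinv x
    have h01 : (0 : Matrix (Fin d) (Fin d) ℂ) = 1 := isUnit_zero_iff.mp h0
    have := congrFun (congrFun h01 ⟨0, hd⟩) ⟨0, hd⟩
    simp [Matrix.one_apply] at this
  have hcancel : ∀ (x : G) (c c' : ℂ), c • ρ x = c' • ρ x → c = c' := by
    intro x c c' hcc
    by_contra hne
    apply hρne x
    ext i j
    have := congrFun (congrFun hcc i) j
    simp only [Matrix.smul_apply, smul_eq_mul] at this
    have : (c - c') * ρ x i j = 0 := by ring_nf; linear_combination this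
    rcases mul_eq_zero.mp this with h | h
    · exact absurd (sub_eq_zero.mp h) hne
    · simpa using h
  have hcocycle : ∀ a b c : G, ω a b * ω (a*b) c = ω b c * ω a (b*c) := by
    intro a b c
    have h1 : (ρ a * ρ b) * ρ c = (ω a b * ω (a*b) c) • ρ (a*b*c) := by
      rw [hproj a b, smul_mul_assoc, hproj (a*b) c, smul_smul]
    have h2 : ρ a * (ρ b * ρ c) = (ω b c * ω a (b*c)) • ρ (a*(b*c)) := by
      rw [hproj b c, mul_smul_comm, hproj a (b*c), smul_smul]
    apply hcancel (a*b*c)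
    rw [← h1, mul_assoc, h2, mul_assoc]
  set β : G → G → ℂˣ := fun x y => Units.mk0 (ω x y) (hω x y) * (Units.mk0 (ω y x) (hω y x))⁻¹
    with hβ
  have hβval : ∀ x y : G, (β x y : ℂ) = ω x y * (ω y x)⁻¹ := by
    intro x y
    rw [hβ, Units.val_mul]
    congr 1
  have hskew : ∀ a b : G, β a b * β b a = 1 := by
    intro a b
    rw [hβ]
    group
  have halt : ∀ a : G, β a a = 1 := fun a => mul_inv_cancel _
  have hmul : ∀ a b c : G, β (a*b) c = β a c * β b c := by
    intro a b c
    have c1 := hcocycle a b c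
    have c2 := hcocycle a c b
    have c3 := hcocycle c a b
    rw [mul_comm b c] at c1
    rw [mul_comm a c] at c2
    apply Units.ext
    have T' : (ω (a*b) c * (ω c a * ω c b)) * ω a b = (ω a c * ω b c * ω c (a*b)) * ω a b := by
      linear_combination (ω c a * ω c b) * c1 - (ω b c * ω c a) * c2 + (ω a c * ω b c) * c3
    have T : ω (a*b) c * (ω c a * ω c b) = ω a c * ω b c * ω c (a*b) :=
      mul_right_cancel₀ (hω a b) T'
    rw [hβval, Units.val_mul, hβval, hβval, ← div_eq_mul_inv, ← div_eq_mul_inv,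
      ← div_eq_mul_inv, div_mul_div_comm,
      div_eq_div_iff (hω c (a*b)) (mul_ne_zero (hω c a) (hω c b))]
    linear_combination T
  have hnd : ∀ a : G, (∀ b : G, β a b = 1) → a = 1 := by
    intro g hg
    have hω_eq : ∀ h : G, ω g h = ω h g := by
      intro h
      have := hg h
      rw [hβ] at this
      have := mul_inv_eq_one.mp this
      exact congrArg Units.val this
    have hcomm : ∀ h : G, ρ g * ρ h = ρ h * ρ g := by
      intro h
      rw [hproj g h, hproj h g, hω_eq h, mul_comm g h]
    obtain ⟨c, hc⟩ := Module.End.exists_eigenvalue (Matrix.mulVecLin (ρ g))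
    set W := Module.End.eigenspace (Matrix.mulVecLin (ρ g)) c with hW
    have hWinv : ∀ h : G, ∀ v ∈ W, (ρ h).mulVec v ∈ W := by
      intro h v hv
      rw [hW, Module.End.mem_eigenspace_iff] at hv ⊢
      rw [Matrix.mulVecLin_apply] at hv ⊢
      rw [Matrix.mulVec_mulVec, hcomm h, ← Matrix.mulVec_mulVec, hv, Matrix.mulVec_smul]
    have hWtop : W = ⊤ := by
      rcases hirr W hWinv with hbot | htop
      · exact absurd hbot hc
      · exact htop
    have hval : ∀ v : Fin d → ℂ, (ρ g).mulVec v = c • v := by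
      intro v
      have hv : v ∈ W := hWtop ▸ Submodule.mem_top
      rw [hW, Module.End.mem_eigenspace_iff, Matrix.mulVecLin_apply] at hv
      exact hv
    apply hfaith g c
    ext i j
    have := congrFun (hval (Pi.single j 1)) i
    simp only [Matrix.mulVec, dotProduct, Pi.single_apply, mul_ite, mul_one, mul_zero,
      Finset.sum_ite_eq', Finset.mem_univ, if_true, Pi.smul_apply, smul_eq_mul] at this
    rw [this]
    simp [Matrix.one_apply, Pi.single_apply]
  exact symplectic_structure (Fintype.card G) G rfl β hmul hskew halt hnd
end

section
/- Every finite abelian group of symmetric type G ≅ H × H is the index group of a nice error basis; that is, G admits a faithful irreducible unitary projective representation of degree |G|^{1/2} = |H|. -/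
open Matrix

open scoped Classical in
private lemma sum_ite_collapse {n H : Type*} [Fintype n] (σ : n ≃ H) (t : H) (f : n → ℂ) :
    ∑ j, (if σ j = t then f j else 0) = f (σ.symm t) := by
  rw [Fintype.sum_eq_single (σ.symm t) (fun j hj => by
    rw [if_neg]
    rw [Equiv.apply_eq_iff_eq_symm_apply]
    exact hj)]
  simp

theorem symmetric_type_is_index_group_of_nice_error_basis
    {G H : Type} [CommGroup G] [Fintype G] [CommGroup H] [Fintype H]
    (e : G ≃* H × H) :
    ∃ ρ : G → Matrix (Fin (Fintype.card H)) (Fin (Fintype.card H)) ℂ,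
      (∀ g, ρ g * (ρ g)ᴴ = 1) ∧
      ρ 1 = 1 ∧
      (∃ ω : G → G → ℂ, (∀ g h, ω g h ≠ 0) ∧
        ∀ g h, ρ g * ρ h = ω g h • ρ (g * h)) ∧
      (∀ (g : G) (c : ℂ),
        ρ g = c • (1 : Matrix (Fin (Fintype.card H)) (Fin (Fintype.card H)) ℂ) → g = 1) ∧
      (∀ W : Submodule ℂ (Fin (Fintype.card H) → ℂ),
        (∀ g : G, ∀ v ∈ W, (ρ g).mulVec v ∈ W) → W = ⊥ ∨ W = ⊤) := by
  classical
  haveI : NeZero (Monoid.exponent H) := ⟨Monoid.exponent_ne_zero_of_finite⟩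
  obtain ⟨ε'⟩ := CommGroup.monoidHom_mulEquiv_of_hasEnoughRootsOfUnity H ℂ
  set ε : H ≃* (H →* ℂˣ) := ε'.symm with hεdef
  set χ : H → H → ℂ := fun b x => (ε b x : ℂ) with hχdef
  have hχ0 : ∀ b x, χ b x ≠ 0 := fun b x => Units.ne_zero _
  have hχb1 : ∀ x, χ 1 x = 1 := by intro x; simp [hχdef]
  have hχx1 : ∀ b, χ b 1 = 1 := by intro b; simp [hχdef]
  have hχbmul : ∀ b b' x, χ (b * b') x = χ b x * χ b' x := by
    intro b b' x; simp [hχdef]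
  have hχxmul : ∀ b x y, χ b (x * y) = χ b x * χ b y := by
    intro b x y; simp [hχdef]
  have hχinv : ∀ b x, χ b x⁻¹ = (χ b x)⁻¹ := by
    intro b x; simp [hχdef]
  have hnorm : ∀ b x, ‖χ b x‖ = 1 := by
    intro b x
    have h1 : ((ε b) x) ^ (Fintype.card H) = 1 := by
      rw [← map_pow, pow_card_eq_one, _root_.map_one]
    have hpow : (χ b x) ^ (Fintype.card H) = 1 := by
      have h2 := congrArg (Units.val) h1
      simpa [hχdef] using h2
    exact Complex.norm_eq_one_of_pow_eq_one hpow Fintype.card_ne_zero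
  have hconj : ∀ b x, (starRingEnd ℂ) (χ b x) = (χ b x)⁻¹ := by
    intro b x
    rw [← Complex.inv_eq_conj (hnorm b x)]
  have hsep : ∀ x : H, x ≠ 1 → ∃ b, χ b x ≠ 1 := by
    intro x hx
    obtain ⟨φ, hφ⟩ := CommGroup.exists_apply_ne_one_of_hasEnoughRootsOfUnity H ℂ hx
    refine ⟨ε.symm φ, fun h => hφ ?_⟩
    apply Units.ext
    simpa [hχdef] using h
  have hsum : ∀ y : H, ∑ b : H, χ b y = if y = 1 then (Fintype.card H : ℂ) else 0 := by
    intro y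
    by_cases hy : y = 1
    · simp [hy, hχx1]
    · rw [if_neg hy]
      obtain ⟨b0, hb0⟩ := hsep y hy
      have h1 : ∑ b : H, χ (b0 * b) y = ∑ b : H, χ b y :=
        Fintype.sum_equiv (Equiv.mulLeft b0) _ _ (fun b => rfl)
      have h2 : ∑ b : H, χ (b0 * b) y = χ b0 y * ∑ b : H, χ b y := by
        rw [Finset.mul_sum]
        exact Finset.sum_congr rfl (fun b _ => hχbmul b0 b y)
      have h3 : (χ b0 y - 1) * ∑ b : H, χ b y = 0 := by
        rw [sub_mul, one_mul, ← h2, h1, sub_self]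
      rcases mul_eq_zero.mp h3 with h | h
      · exact absurd (sub_eq_zero.mp h) hb0
      · exact h
  set σ : Fin (Fintype.card H) ≃ H := (Fintype.equivFin H).symm with hσdef
  set ρ : G → Matrix (Fin (Fintype.card H)) (Fin (Fintype.card H)) ℂ :=
    fun g => Matrix.of fun i j => if σ j = σ i * (e g).1 then χ (e g).2 (σ i) else 0 with hρdef
  have hmulVec : ∀ (g : G) (v : Fin (Fintype.card H) → ℂ) (i : Fin (Fintype.card H)),
      (ρ g).mulVec v i = χ (e g).2 (σ i) * v (σ.symm (σ i * (e g).1)) := by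
    intro g v i
    have : (ρ g).mulVec v i
        = ∑ j, (if σ j = σ i * (e g).1 then χ (e g).2 (σ i) * v j else 0) := by
      simp only [Matrix.mulVec, dotProduct, hρdef, Matrix.of_apply, ite_mul, zero_mul]
    rw [this, sum_ite_collapse σ (σ i * (e g).1) (fun j => χ (e g).2 (σ i) * v j)]
  refine ⟨ρ, ?_, ?_, ⟨fun g h => χ (e h).2 (e g).1, fun g h => hχ0 _ _, ?_⟩, ?_, ?_⟩
  · -- unitarity
    intro g
    ext i k
    rw [Matrix.mul_apply]
    have hterm : ∀ j, ρ g i j * (ρ g)ᴴ j k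
        = if σ j = σ i * (e g).1 then
            (if σ j = σ k * (e g).1 then
              χ (e g).2 (σ i) * (starRingEnd ℂ) (χ (e g).2 (σ k)) else 0) else 0 := by
      intro j
      simp only [hρdef, Matrix.conjTranspose_apply, Matrix.of_apply]
      split_ifs <;> simp
    rw [Finset.sum_congr rfl (fun j _ => hterm j), sum_ite_collapse]
    simp only [Equiv.apply_symm_apply]
    by_cases hik : i = k
    · subst hik
      rw [if_pos rfl, Matrix.one_apply_eq, hconj, mul_inv_cancel₀ (hχ0 _ _)]
    · rw [if_neg, Matrix.one_apply_ne hik]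
      intro hc
      exact hik (σ.injective (mul_right_cancel hc))
  · -- identity
    ext i j
    have h1 : e (1 : G) = 1 := _root_.map_one e
    simp only [hρdef, Matrix.of_apply, h1, Prod.fst_one, Prod.snd_one, mul_one, hχb1]
    rw [Matrix.one_apply, Equiv.apply_eq_iff_eq]
    simp [eq_comm]
  · -- projective multiplication
    intro g h
    ext i k
    rw [Matrix.mul_apply]
    have hterm : ∀ j, ρ g i j * ρ h j k
        = if σ j = σ i * (e g).1 then
            (if σ k = σ j * (e h).1 then χ (e g).2 (σ i) * χ (e h).2 (σ j) else 0) else 0 := by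
      intro j
      simp only [hρdef, Matrix.of_apply]
      split_ifs <;> simp
    rw [Finset.sum_congr rfl (fun j _ => hterm j), sum_ite_collapse]
    simp only [Equiv.apply_symm_apply]
    have hgh : e (g * h) = e g * e h := map_mul e g h
    simp only [Matrix.smul_apply, hρdef, Matrix.of_apply, hgh, Prod.fst_mul, Prod.snd_mul,
      smul_eq_mul]
    rw [← mul_assoc (σ i)]
    split_ifs with hcond
    · rw [hχxmul, hχbmul]; ring
    · ring
  · -- faithfulness
    intro g c hgc
    have ha : (e g).1 = 1 := by
      by_contra ha
      have hne : σ.symm (1 : H) ≠ σ.symm ((e g).1) := fun hc => ha (σ.symm.injective hc).symm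
      have h1 := congrFun (congrFun hgc (σ.symm 1)) (σ.symm ((e g).1))
      simp only [hρdef, Matrix.of_apply, Equiv.apply_symm_apply, one_mul, if_pos rfl,
        Matrix.smul_apply, Matrix.one_apply_ne hne, smul_eq_mul, mul_zero] at h1
      exact hχ0 _ _ h1
    have hdiag : ∀ x : H, χ (e g).2 x = c := by
      intro x
      have h1 := congrFun (congrFun hgc (σ.symm x)) (σ.symm x)
      simpa [hρdef, ha, Matrix.one_apply] using h1
    have hc1 : c = 1 := by rw [← hdiag 1, hχx1]
    have hb : (e g).2 = 1 := by
      by_contra hb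
      obtain ⟨x, hx⟩ : ∃ x, χ (e g).2 x ≠ 1 := by
        by_contra hall
        push_neg at hall
        apply hb
        apply ε.injective
        rw [_root_.map_one]
        ext x
        rw [MonoidHom.one_apply]
        have h9 : ((ε (e g).2) x : ℂ) = ((1 : ℂˣ) : ℂ) := by
          rw [Units.val_one]
          exact hall x
        exact h9
      exact hx (by rw [hdiag x, hc1])
    apply e.injective
    rw [_root_.map_one]
    exact Prod.ext ha hb
  · -- irreducibility
    intro W hW
    by_cases hbot : W = ⊥
    · exact Or.inl hbot
    right
    obtain ⟨v, hvW, hv0⟩ := Submodule.exists_mem_ne_zero_of_ne_bot hbot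
    obtain ⟨i0, hi0⟩ : ∃ i, v i ≠ 0 := Function.ne_iff.mp hv0
    have hE : ∀ p : H × H, e (e.symm p) = p := fun p => e.apply_symm_apply p
    have hsingle : Pi.single i0 (1 : ℂ) ∈ W := by
      have hu : (∑ b : H, (χ b (σ i0))⁻¹ • (ρ (e.symm (1, b))).mulVec v) ∈ W :=
        Submodule.sum_mem W (fun b _ => Submodule.smul_mem W _ (hW _ v hvW))
      have huval : (∑ b : H, (χ b (σ i0))⁻¹ • (ρ (e.symm (1, b))).mulVec v)
          = ((Fintype.card H : ℂ) * v i0) • (Pi.single i0 1 : Fin (Fintype.card H) → ℂ) := by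
        funext i
        simp only [Finset.sum_apply, Pi.smul_apply, smul_eq_mul]
        have hterm : ∀ b : H, (χ b (σ i0))⁻¹ * (ρ (e.symm (1, b))).mulVec v i
            = χ b (σ i * (σ i0)⁻¹) * v i := by
          intro b
          rw [hmulVec, hE, hχxmul, hχinv]
          simp only [mul_one, Equiv.symm_apply_apply]
          ring
        rw [Finset.sum_congr rfl (fun b _ => hterm b), ← Finset.sum_mul, hsum]
        by_cases hi : i = i0
        · subst hi
          simp [Pi.single_eq_same]
        · have hcnd : ¬ (σ i * (σ i0)⁻¹ = 1) := by
            rw [mul_inv_eq_one]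
            exact fun hc => hi (σ.injective hc)
          rw [if_neg hcnd]
          simp [Pi.single_eq_of_ne hi]
      have hcne : ((Fintype.card H : ℂ) * v i0) ≠ 0 :=
        mul_ne_zero (Nat.cast_ne_zero.mpr Fintype.card_ne_zero) hi0
      have hmem := Submodule.smul_mem W ((Fintype.card H : ℂ) * v i0)⁻¹ (huval ▸ hu)
      rwa [smul_smul, inv_mul_cancel₀ hcne, one_smul] at hmem
    have hallsingle : ∀ k, Pi.single k (1 : ℂ) ∈ W := by
      intro k
      have hmem := hW (e.symm (σ i0 * (σ k)⁻¹, 1)) _ hsingle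
      have hval : (ρ (e.symm (σ i0 * (σ k)⁻¹, 1))).mulVec (Pi.single i0 (1 : ℂ))
          = (Pi.single k 1 : Fin (Fintype.card H) → ℂ) := by
        funext i
        rw [hmulVec, hE, hχb1, one_mul]
        by_cases hik : i = k
        · subst hik
          have h3 : σ.symm (σ i * (σ i0 * (σ i)⁻¹)) = i0 := by
            rw [show σ i * (σ i0 * (σ i)⁻¹) = σ i0 by
              rw [mul_comm (σ i0) (σ i)⁻¹, mul_inv_cancel_left]]
            exact σ.symm_apply_apply i0
          rw [h3]
          simp [Pi.single_eq_same]
        · have hne : σ.symm (σ i * (σ i0 * (σ k)⁻¹)) ≠ i0 := by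
            intro hc
            have h4 := congrArg σ hc
            rw [Equiv.apply_symm_apply] at h4
            have h5 : (σ i * (σ k)⁻¹) * σ i0 = 1 * σ i0 := by
              rw [one_mul, mul_assoc, mul_comm ((σ k)⁻¹) (σ i0)]
              exact h4
            have h6 : σ i = σ k := by
              have h7 := mul_right_cancel h5
              rwa [mul_inv_eq_one] at h7
            exact hik (σ.injective h6)
          rw [Pi.single_eq_of_ne hne, Pi.single_eq_of_ne hik]
      rwa [hval] at hmem
    apply Submodule.eq_top_iff'.mpr
    intro w
    rw [pi_eq_sum_univ w]
    refine Submodule.sum_mem W (fun i _ => Submodule.smul_mem W _ ?_)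
    have h8 : (fun j => if i = j then (1 : ℂ) else 0) = Pi.single i 1 := by
      funext j
      rw [Pi.single_apply]
      simp [eq_comm]
    rw [h8]
    exact hallsingle i
end

section
/- If H is a finite nilpotent group of class at most 2 with cyclic center, then H is a group of central type: H admits a faithful irreducible complex representation of degree (H : Z(H))^{1/2}. -/
open Pointwise
open scoped commutatorElement
set_option linter.unusedSectionVars false
set_option maxHeartbeats 1000000


section CommLemmas
variable {H : Type} [Group H]

lemma comm_mem_center (hnil : commutator H ≤ Subgroup.center H) (g h : H) :
    ⁅g, h⁆ ∈ Subgroup.center H :=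
  hnil (Subgroup.commutator_mem_commutator (Subgroup.mem_top g) (Subgroup.mem_top h))

lemma comm_mul_right (hnil : commutator H ≤ Subgroup.center H) (w g h : H) :
    ⁅w, g * h⁆ = ⁅w, g⁆ * ⁅w, h⁆ := by
  have hz := Subgroup.mem_center_iff.mp (comm_mem_center hnil w h)
  simp only [commutatorElement_def] at hz ⊢
  calc w * (g * h) * w⁻¹ * (g * h)⁻¹
      = w * g * w⁻¹ * g⁻¹ * (g * (w * h * w⁻¹ * h⁻¹) * g⁻¹) := by group
    _ = w * g * w⁻¹ * g⁻¹ * ((w * h * w⁻¹ * h⁻¹) * g * g⁻¹) := by rw [hz g]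
    _ = w * g * w⁻¹ * g⁻¹ * (w * h * w⁻¹ * h⁻¹) := by group

lemma comm_mul_left (hnil : commutator H ≤ Subgroup.center H) (g h k : H) :
    ⁅g * h, k⁆ = ⁅g, k⁆ * ⁅h, k⁆ := by
  have h1 : ⁅g * h, k⁆ = ⁅k, g * h⁆⁻¹ := (commutatorElement_inv k (g*h)).symm
  rw [h1, comm_mul_right hnil, mul_inv_rev, commutatorElement_inv, commutatorElement_inv]
  exact (Subgroup.mem_center_iff.mp (comm_mem_center hnil h k) _).symm

/-- for fixed k, `g ↦ ⁅g, k⁆` as a monoid hom. -/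
def commHomR (hnil : commutator H ≤ Subgroup.center H) (k : H) : H →* H :=
  MonoidHom.mk' (fun g => ⁅g, k⁆) (fun g h => comm_mul_left hnil g h k)

def commHomL (hnil : commutator H ≤ Subgroup.center H) (w : H) : H →* H :=
  MonoidHom.mk' (fun k => ⁅w, k⁆) (fun g h => comm_mul_right hnil w g h)

lemma comm_inv_left (hnil : commutator H ≤ Subgroup.center H) (g k : H) :
    ⁅g⁻¹, k⁆ = ⁅g, k⁆⁻¹ := map_inv (commHomR hnil k) g

lemma comm_inv_right (hnil : commutator H ≤ Subgroup.center H) (w k : H) :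
    ⁅w, k⁻¹⁆ = ⁅w, k⁆⁻¹ := map_inv (commHomL hnil w) k

end CommLemmas


section CharExt
variable {A : Type} [CommGroup A] [Finite A]

/-- one-step character extension -/
lemma char_ext_step (C : Subgroup A) (μ : C →* ℂˣ) (a : A) :
    ∃ μ' : (C ⊔ Subgroup.zpowers a : Subgroup A) →* ℂˣ,
      ∀ (c : A) (hc : c ∈ C), μ' ⟨c, SetLike.le_def.mp le_sup_left hc⟩ = μ ⟨c, hc⟩ := by
  classical
  set D := (C ⊔ Subgroup.zpowers a : Subgroup A) with hD
  -- the minimal positive power of `a` lying in `C`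
  have hT : ∃ n, 0 < n ∧ a ^ n ∈ C := by
    refine ⟨orderOf a, ?_, ?_⟩
    · exact orderOf_pos a
    · rw [pow_orderOf_eq_one]; exact one_mem C
  set m := Nat.find hT with hm
  obtain ⟨hm0, hmC⟩ := Nat.find_spec hT
  -- a root ζ with ζ^m = μ (a^m)
  obtain ⟨z, hz⟩ := IsAlgClosed.exists_pow_nat_eq ((μ ⟨a ^ m, hmC⟩ : ℂˣ) : ℂ) hm0
  have hz0 : z ≠ 0 := by
    intro h; rw [h, zero_pow hm0.ne'] at hz
    exact (Units.ne_zero _) hz.symm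
  set ζ : ℂˣ := Units.mk0 z hz0 with hζ
  have hζm : ζ ^ m = μ ⟨a ^ m, hmC⟩ := by
    ext; push_cast [hζ]; exact hz
  -- divisibility: a^l ∈ C → μ (a^l) = ζ^l for integers l
  have hdvd : ∀ l : ℤ, a ^ l ∈ C → (m : ℤ) ∣ l := by
    intro l hl
    have h0 : a ^ (l % m) ∈ C := by
      have : a ^ (l % m) = a ^ l * (a ^ (m : ℤ)) ^ (-(l / m)) := by
        rw [← zpow_mul, ← zpow_add]
        congr 1; rw [Int.emod_def]; ring
      rw [this]
      exact mul_mem hl (zpow_mem (by rwa [zpow_natCast]) _)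
    by_contra hnd
    have hlt : (l % m).toNat < m := by
      have := Int.emod_lt_of_pos l (by exact_mod_cast hm0 : (0:ℤ) < m)
      omega
    have hpos : 0 < (l % m).toNat := by
      have := Int.emod_nonneg l (by exact_mod_cast hm0.ne' : (m:ℤ) ≠ 0)
      omega
    have : a ^ ((l % m).toNat) ∈ C := by
      rw [← zpow_natCast]
      rwa [Int.toNat_of_nonneg (Int.emod_nonneg l (by exact_mod_cast hm0.ne'))]
    exact Nat.find_min hT hlt ⟨hpos, this⟩
  have hpow : ∀ (l : ℤ) (hl : a ^ l ∈ C), μ ⟨a ^ l, hl⟩ = ζ ^ l := by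
    intro l hl
    obtain ⟨q, rfl⟩ := hdvd l hl
    have : (⟨a ^ ((m : ℤ) * q), hl⟩ : C) = (⟨a ^ m, hmC⟩ : C) ^ q := by
      ext; push_cast
      rw [← zpow_natCast a m, ← zpow_mul]
    rw [this, map_zpow, hζm.symm, ← zpow_natCast ζ m, ← zpow_mul]
  -- surjection π : C × Multiplicative ℤ →* D
  let h1 : C →* D := Subgroup.inclusion le_sup_left
  let h2 : Multiplicative ℤ →* D :=
    zpowersHom D (⟨a, SetLike.le_def.mp le_sup_right (Subgroup.mem_zpowers a)⟩ : D)
  let π : C × Multiplicative ℤ →* D := (h1.comp (MonoidHom.fst _ _)) * (h2.comp (MonoidHom.snd _ _))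
  have hπ : Function.Surjective π := by
    rintro ⟨x, hx⟩
    obtain ⟨y, hy, w, hw, rfl⟩ := Subgroup.mem_sup.mp hx
    obtain ⟨l, rfl⟩ := hw
    refine ⟨(⟨y, hy⟩, Multiplicative.ofAdd l), ?_⟩
    ext
    simp [π, h1, h2, Subgroup.inclusion, zpowersHom_apply]
  let f : C × Multiplicative ℤ →* ℂˣ :=
    (μ.comp (MonoidHom.fst _ _)) * ((zpowersHom ℂˣ ζ).comp (MonoidHom.snd _ _))
  have hker : π.ker ≤ f.ker := by
    rintro ⟨c, l⟩ hcl
    have h1' : (c : A) * a ^ (l.toAdd) = 1 := by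
      have := congrArg (Subtype.val) (MonoidHom.mem_ker.mp hcl)
      simpa [π, h1, h2, Subgroup.inclusion, zpowersHom_apply] using this
    have hal : a ^ (l.toAdd) ∈ C := by
      have : a ^ (l.toAdd) = (c : A)⁻¹ := by
        rw [eq_inv_iff_mul_eq_one, mul_comm]; exact h1'
      rw [this]; exact inv_mem c.2
    have hc' : c = (⟨a ^ (l.toAdd), hal⟩ : C)⁻¹ := by
      ext; push_cast
      rw [eq_inv_iff_mul_eq_one]; exact h1'
    rw [MonoidHom.mem_ker]
    have hf : f (c, l) = μ c * ζ ^ (l.toAdd) := rfl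
    rw [hf, hc', map_inv, hpow _ hal]
    simp
  let μ' : D →* ℂˣ := π.liftOfSurjective hπ ⟨f, hker⟩
  refine ⟨μ', fun c hc => ?_⟩
  have : (⟨c, SetLike.le_def.mp le_sup_left hc⟩ : D) = π (⟨c, hc⟩, Multiplicative.ofAdd 0) := by
    ext; simp [π, h1, h2, Subgroup.inclusion, zpowersHom_apply]
  rw [this]
  have := MonoidHom.liftOfRightInverse_comp_apply π _ (Function.rightInverse_surjInv hπ)
    ⟨f, hker⟩ (⟨c, hc⟩, Multiplicative.ofAdd 0)
  rw [this]
  simp [f, zpowersHom_apply]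

lemma subgroup_card_lt {A : Type} [Group A] [Finite A] {C D : Subgroup A} (h : C < D) :
    Nat.card C < Nat.card D := by
  have h1 : Nat.card C = (C : Set A).ncard := Nat.card_coe_set_eq (C : Set A)
  have h2 : Nat.card D = (D : Set A).ncard := Nat.card_coe_set_eq (D : Set A)
  rw [h1, h2]
  exact Set.ncard_lt_ncard (SetLike.coe_ssubset_coe.mpr h) (Set.toFinite _)

/-- every character of a subgroup of a finite abelian group extends -/
lemma char_ext (B : Subgroup A) (ν : B →* ℂˣ) :
    ∃ μ : A →* ℂˣ, ∀ (b : A) (hb : b ∈ B), μ b = ν ⟨b, hb⟩ := by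
  classical
  have hfin : Finite (Subgroup A) := Finite.of_injective _ SetLike.coe_injective
  set S : Set (Subgroup A) := {C | ∃ hBC : B ≤ C, ∃ μC : C →* ℂˣ,
    ∀ (b : A) (hb : b ∈ B), μC ⟨b, hBC hb⟩ = ν ⟨b, hb⟩} with hS
  have hBS : B ∈ S := ⟨le_refl B, ν, fun b hb => rfl⟩
  obtain ⟨C, hCS, hmax⟩ := Set.Finite.exists_maximalFor (fun C : Subgroup A => Nat.card C) S
    (Set.toFinite S) ⟨B, hBS⟩
  obtain ⟨hBC, μC, hμC⟩ := hCS
  have hCtop : C = ⊤ := by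
    by_contra hne
    obtain ⟨a, ha⟩ : ∃ a : A, a ∉ C := by
      by_contra hall
      push_neg at hall
      exact hne (Subgroup.eq_top_iff' C |>.mpr hall)
    obtain ⟨μ', hμ'⟩ := char_ext_step C μC a
    have hCS' : (C ⊔ Subgroup.zpowers a : Subgroup A) ∈ S := by
      refine ⟨le_trans hBC le_sup_left, μ', fun b hb => ?_⟩
      rw [hμ' b (hBC hb)]
      exact hμC b hb
    have hlt : C < C ⊔ Subgroup.zpowers a := by
      refine lt_of_le_of_ne le_sup_left ?_
      intro hEq
      exact ha (hEq ▸ SetLike.le_def.mp le_sup_right (Subgroup.mem_zpowers a))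
    have := hmax hCS' (le_of_lt (subgroup_card_lt hlt))
    exact absurd this (not_le.mpr (subgroup_card_lt hlt))
  subst hCtop
  refine ⟨μC.comp (Subgroup.topEquiv.symm.toMonoidHom), fun b hb => ?_⟩
  rw [← hμC b hb]
  rfl


/-- a finite cyclic group admits a faithful character into ℂˣ -/
lemma exists_faithful_char (Z : Type) [CommGroup Z] [Finite Z] [IsCyclic Z] :
    ∃ lam : Z →* ℂˣ, Function.Injective lam := by
  set n := Nat.card Z with hn
  have hn0 : n ≠ 0 := Nat.card_pos.ne'
  have : NeZero ((n : ℕ) : ℂ) := ⟨by exact_mod_cast hn0⟩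
  have : NeZero n := ⟨hn0⟩
  have : HasEnoughRootsOfUnity ℂ n := inferInstance
  have hcard : Nat.card (rootsOfUnity n ℂ) = n := HasEnoughRootsOfUnity.natCard_rootsOfUnity ℂ n
  have e : Z ≃* (rootsOfUnity n ℂ) := mulEquivOfCyclicCardEq (by rw [hcard])
  exact ⟨(rootsOfUnity n ℂ).subtype.comp e.toMonoidHom,
    (Subgroup.subtype_injective _).comp e.injective⟩

/-- sum of a nontrivial character over a finite group vanishes -/
lemma char_sum_eq_zero {B : Type} [Group B] [Fintype B] (f : B →* ℂˣ) {b0 : B}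
    (hb0 : f b0 ≠ 1) : ∑ b : B, ((f b : ℂˣ) : ℂ) = 0 := by
  have key : ((f b0 : ℂˣ) : ℂ) * ∑ b : B, ((f b : ℂˣ) : ℂ) = ∑ b : B, ((f b : ℂˣ) : ℂ) := by
    rw [Finset.mul_sum]
    refine Fintype.sum_bijective (fun b => b0 * b) (Group.mulLeft_bijective b0) _ _ ?_
    intro b
    rw [map_mul]; push_cast; ring
  have : (((f b0 : ℂˣ) : ℂ) - 1) * ∑ b : B, ((f b : ℂˣ) : ℂ) = 0 := by
    rw [sub_mul, one_mul, key, sub_self]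
  rcases mul_eq_zero.mp this with h | h
  · exfalso; apply hb0
    have : ((f b0 : ℂˣ) : ℂ) = 1 := by linear_combination h
    ext; exact this
  · exact h

/-- the character group of a finite abelian group is (noncanonically) isomorphic to it -/
lemma char_group_equiv (G : Type) [CommGroup G] [Finite G] :
    Nonempty ((G →* ℂˣ) ≃* G) := by
  have hexp : Monoid.exponent G ≠ 0 := Monoid.exponent_ne_zero_of_finite
  have : NeZero ((Monoid.exponent G : ℕ) : ℂ) := ⟨by exact_mod_cast hexp⟩
  exact CommGroup.monoidHom_mulEquiv_of_hasEnoughRootsOfUnity G ℂ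


section MaxAb
variable {H : Type} [Group H] [Finite H]

lemma normal_of_le (hnil : commutator H ≤ Subgroup.center H) {A : Subgroup H}
    (hZA : Subgroup.center H ≤ A) : A.Normal := by
  constructor
  intro a ha g
  have h1 : g * a * g⁻¹ = a * ⁅a⁻¹, g⁆ := by
    simp only [commutatorElement_def]; group
  rw [h1]
  exact mul_mem ha (hZA (comm_mem_center hnil a⁻¹ g))

lemma exists_max_abelian (hnil : commutator H ≤ Subgroup.center H) :
    ∃ A : Subgroup H, Subgroup.center H ≤ A ∧ (∀ a ∈ A, ∀ b ∈ A, a * b = b * a) ∧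
      (∀ h : H, (∀ a ∈ A, a * h = h * a) → h ∈ A) := by
  classical
  have hfin : Finite (Subgroup H) := Finite.of_injective _ SetLike.coe_injective
  set S : Set (Subgroup H) := {C | Subgroup.center H ≤ C ∧ ∀ a ∈ C, ∀ b ∈ C, a * b = b * a}
    with hS
  have hZS : Subgroup.center H ∈ S :=
    ⟨le_refl _, fun a ha b _ => (Subgroup.mem_center_iff.mp ha b).symm⟩
  obtain ⟨A, hAS, hmax⟩ := Set.Finite.exists_maximalFor (fun C : Subgroup H => Nat.card C) S
    (Set.toFinite S) ⟨_, hZS⟩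
  obtain ⟨hZA, habel⟩ := hAS
  refine ⟨A, hZA, habel, fun h hcomm => ?_⟩
  by_contra hh
  haveI := normal_of_le hnil hZA
  set D := A ⊔ Subgroup.zpowers h with hD
  have hmemD : ∀ x ∈ D, ∃ a ∈ A, ∃ k : ℤ, a * h ^ k = x := by
    intro x hx
    have : x ∈ (A : Set H) * (Subgroup.zpowers h : Set H) := by
      rw [← Subgroup.normal_mul]; exact hx
    obtain ⟨a, ha, w, hw, rfl⟩ := this
    obtain ⟨k, rfl⟩ := hw
    exact ⟨a, ha, k, rfl⟩
  have hDS : D ∈ S := by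
    refine ⟨le_trans hZA le_sup_left, ?_⟩
    intro x hx y hy
    obtain ⟨a, ha, k, rfl⟩ := hmemD x hx
    obtain ⟨b, hb, l, rfl⟩ := hmemD y hy
    have cab : Commute a b := habel a ha b hb
    have cah : Commute a h := hcomm a ha
    have cbh : Commute b h := hcomm b hb
    have c2 : Commute (h ^ k) (b * h ^ l) :=
      Commute.mul_right (cbh.symm.zpow_left k) ((Commute.refl h).zpow_zpow k l)
    have c1 : Commute (a * h ^ k) (b * h ^ l) :=
      Commute.mul_left (Commute.mul_right cab (cah.zpow_right l)) c2
    exact c1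
  have hlt : A < D := by
    refine lt_of_le_of_ne le_sup_left ?_
    intro hEq
    exact hh (hEq ▸ SetLike.le_def.mp le_sup_right (Subgroup.mem_zpowers h))
  have hcard : Nat.card A < Nat.card D := by
    have h1 : Nat.card A = ((A : Set H)).ncard := Nat.card_coe_set_eq _
    have h2 : Nat.card D = ((D : Set H)).ncard := Nat.card_coe_set_eq _
    rw [h1, h2]
    exact Set.ncard_lt_ncard (SetLike.coe_ssubset_coe.mpr hlt) (Set.toFinite _)
  exact absurd (hmax hDS (le_of_lt hcard)) (not_le.mpr hcard)

end MaxAb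


open Matrix

theorem nilpotent_class_two_cyclic_center_is_central_type
    {H : Type} [Group H] [Finite H]
    (hnil : commutator H ≤ Subgroup.center H)
    (hcyc : IsCyclic (Subgroup.center H)) :
    ∃ (d : ℕ) (ρ : H →* Matrix (Fin d) (Fin d) ℂ),
      Function.Injective ρ ∧
      (∀ W : Submodule ℂ (Fin d → ℂ),
        (∀ g : H, ∀ v ∈ W, (ρ g).mulVec v ∈ W) → W = ⊥ ∨ W = ⊤) ∧
      d ^ 2 = Nat.card (H ⧸ Subgroup.center H) := by
  classical
  letI : CommGroup (Subgroup.center H) :=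
    { (inferInstance : Group (Subgroup.center H)) with
      mul_comm := fun a b => Subtype.ext (Subgroup.mem_center_iff.mp b.2 a) }
  obtain ⟨lam, hlam⟩ := exists_faithful_char (Subgroup.center H)
  obtain ⟨A, hZA, habel, hclosed⟩ := exists_max_abelian hnil
  haveI hAnormal : A.Normal := normal_of_le hnil hZA
  letI : CommGroup ↥A :=
    { (inferInstance : Group ↥A) with
      mul_comm := fun a b => Subtype.ext (habel ↑a a.2 ↑b b.2) }
  -- extend the faithful central character to A
  set ν : (Subgroup.center H).subgroupOf A →* ℂˣ :=
    lam.comp (Subgroup.subgroupOfEquivOfLe hZA).toMonoidHom with hν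
  have hνinj : Function.Injective ν :=
    hlam.comp (Subgroup.subgroupOfEquivOfLe hZA).injective
  obtain ⟨μ, hμ⟩ := char_ext ((Subgroup.center H).subgroupOf A) ν
  have hμZ : ∀ (w : H) (hw : w ∈ A), w ∈ Subgroup.center H → μ ⟨w, hw⟩ = 1 → w = 1 := by
    intro w hw hwZ h1
    have hmem : (⟨w, hw⟩ : ↥A) ∈ (Subgroup.center H).subgroupOf A :=
      Subgroup.mem_subgroupOf.mpr hwZ
    rw [hμ _ hmem] at h1
    have h2 : (⟨⟨w, hw⟩, hmem⟩ : (Subgroup.center H).subgroupOf A) = 1 := by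
      apply hνinj; rw [h1, _root_.map_one]
    have h3 : (⟨w, hw⟩ : ↥A) = 1 := congrArg Subtype.val h2
    exact congrArg Subtype.val h3
  -- the coset space
  set X := H ⧸ A with hX
  haveI : Fintype X := Fintype.ofFinite X
  set d := Nat.card X with hd
  have hdcard : Fintype.card X = d := by rw [hd, Nat.card_eq_fintype_card]
  set e : X ≃ Fin d := (Fintype.equivFin X).trans (finCongr hdcard) with he
  -- smul facts
  have hsmul_mk : ∀ (g h : H), g • (QuotientGroup.mk h : X) = QuotientGroup.mk (g * h) := by
    intro g h
    rw [← smul_eq_mul]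
    exact MulAction.Quotient.smul_mk A g h
  have hfix : ∀ (a : H), a ∈ A → ∀ x : X, a • x = x := by
    intro a ha x
    conv_lhs => rw [← QuotientGroup.out_eq' x]
    rw [hsmul_mk]
    conv_rhs => rw [← QuotientGroup.out_eq' x]
    apply (QuotientGroup.eq).mpr
    have heq : (a * x.out)⁻¹ * x.out = x.out⁻¹ * a⁻¹ * (x.out⁻¹)⁻¹ := by group
    rw [heq]
    exact hAnormal.conj_mem a⁻¹ (inv_mem ha) x.out⁻¹
  have pfA : ∀ (g : H) (x : X), (g • x).out⁻¹ * g * x.out ∈ A := by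
    intro g x
    have h1 : (QuotientGroup.mk ((g • x).out) : X) = QuotientGroup.mk (g * x.out) := by
      rw [QuotientGroup.out_eq', ← hsmul_mk, QuotientGroup.out_eq']
    have h2 := QuotientGroup.eq.mp h1
    rwa [← mul_assoc] at h2
  set coc : H → X → ℂˣ := fun g x => μ ⟨(g • x).out⁻¹ * g * x.out, pfA g x⟩ with hcoc
  have hcoc_mul : ∀ (g h : H) (x : X), coc (g * h) x = coc g (h • x) * coc h x := by
    intro g h x
    rw [hcoc]
    simp only []
    rw [← _root_.map_mul]
    congr 1
    ext
    show ((g * h) • x).out⁻¹ * (g * h) * x.out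
      = ((g • h • x).out⁻¹ * g * (h • x).out) * ((h • x).out⁻¹ * h * x.out)
    rw [mul_smul]
    group
  have hcoc_one : ∀ x : X, coc 1 x = 1 := by
    intro x
    rw [hcoc]
    simp only []
    have h1 : ((1 : H) • x) = x := one_smul _ _
    have h2 : (⟨((1 : H) • x).out⁻¹ * 1 * x.out, pfA 1 x⟩ : ↥A) = 1 := by
      ext
      show ((1 : H) • x).out⁻¹ * 1 * x.out = 1
      rw [h1]
      group
    rw [h2, _root_.map_one]
  -- the representation
  set ρf : H → Matrix (Fin d) (Fin d) ℂ := fun g =>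
    Matrix.of (fun i j => if i = e (g • e.symm j) then (coc g (e.symm j) : ℂ) else 0) with hρf
  have hρf_one : ρf 1 = 1 := by
    ext i j
    rw [hρf]
    simp only [Matrix.of_apply, one_smul, Equiv.apply_symm_apply, hcoc_one, Matrix.one_apply]
    simp
  have hρf_mul : ∀ g h, ρf (g * h) = ρf g * ρf h := by
    intro g h
    ext i j
    rw [Matrix.mul_apply]
    rw [Finset.sum_eq_single (e (h • e.symm j))]
    · simp only [hρf, Matrix.of_apply, Equiv.symm_apply_apply, if_pos rfl]
      rw [hcoc_mul g h (e.symm j), mul_smul]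
      by_cases hi : i = e (g • h • e.symm j)
      · rw [if_pos hi, if_pos hi, Units.val_mul]; simp
      · rw [if_neg hi, if_neg hi, zero_mul]
    · intro k _ hk
      simp only [hρf, Matrix.of_apply]
      rw [if_neg hk, mul_zero]
    · intro hmem
      exact absurd (Finset.mem_univ _) hmem
  set ρ : H →* Matrix (Fin d) (Fin d) ℂ :=
    { toFun := ρf, map_one' := hρf_one, map_mul' := hρf_mul } with hρ
  have hρval : ∀ g i j, ρ g i j = if i = e (g • e.symm j) then (coc g (e.symm j) : ℂ) else 0 :=
    fun g i j => rfl
  -- the characters of A attached to cosets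
  set chi : X → (↥A →* ℂˣ) := fun x => MonoidHom.mk' (fun a => coc ↑a x)
    (by
      intro a b
      show coc (↑a * ↑b) x = coc ↑a x * coc ↑b x
      rw [hcoc_mul ↑a ↑b x, hfix ↑b b.2 x]) with hchi
  have hchi_val : ∀ (x : X) (a : ↥A), chi x a = coc ↑a x := fun _ _ => rfl
  have hcoc_A : ∀ (a : ↥A) (x : X),
      coc ↑a x = μ ⟨x.out⁻¹ * ↑a * x.out, by
        have heq : x.out⁻¹ * ↑a * x.out = x.out⁻¹ * ↑a * (x.out⁻¹)⁻¹ := by group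
        rw [heq]; exact hAnormal.conj_mem ↑a a.2 x.out⁻¹⟩ := by
    intro a x
    rw [hcoc]
    simp only []
    congr 1
    ext
    show ((↑a : H) • x).out⁻¹ * ↑a * x.out = x.out⁻¹ * ↑a * x.out
    rw [hfix ↑a a.2 x]
  -- separation: the characters chi x are pairwise distinct
  have hQeq : ∀ x y : X, (∀ a : ↥A, ⁅(↑a : H), x.out⁆ = ⁅(↑a : H), y.out⁆) → x = y := by
    intro x y hc
    have hmem : x.out⁻¹ * y.out ∈ A := by
      apply hclosed
      intro a ha
      have h2 : ⁅a, x.out⁻¹ * y.out⁆ = 1 := by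
        rw [comm_mul_right hnil, comm_inv_right hnil, hc ⟨a, ha⟩, inv_mul_cancel]
      exact (commutatorElement_eq_one_iff_commute.mp h2).eq
    have h3 : (QuotientGroup.mk x.out : X) = QuotientGroup.mk y.out :=
      (QuotientGroup.eq).mpr hmem
    rwa [QuotientGroup.out_eq', QuotientGroup.out_eq'] at h3
  have hsep : ∀ x y : X, chi x = chi y → x = y := by
    intro x y hxy
    apply hQeq
    intro a
    -- from equality of characters, derive equality of commutators
    have h1 : coc ↑a x = coc ↑a y := by
      rw [← hchi_val, ← hchi_val, hxy]
    rw [hcoc_A, hcoc_A] at h1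
    set t := x.out with ht
    set r := y.out with hr
    set C : H := ⁅(↑a : H)⁻¹, t⁻¹⁆ * ⁅(↑a : H)⁻¹, r⁻¹⁆⁻¹ with hC
    have hCZ : C ∈ Subgroup.center H :=
      mul_mem (comm_mem_center hnil _ _) (inv_mem (comm_mem_center hnil _ _))
    have hCc := Subgroup.mem_center_iff.mp hCZ
    have heq : (t⁻¹ * ↑a * t) * (r⁻¹ * (↑a : H)⁻¹ * r) = C := by
      have h4 : (t⁻¹ * ↑a * t) * (r⁻¹ * (↑a : H)⁻¹ * r) = ↑a * (C * (↑a : H)⁻¹) := by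
        rw [hC]
        simp only [commutatorElement_def]
        group
      rw [h4, ← hCc ((↑a : H)⁻¹)]
      exact mul_inv_cancel_left _ _
    have hmemt : t⁻¹ * ↑a * t ∈ A := by
      have h5 : t⁻¹ * ↑a * t = t⁻¹ * ↑a * (t⁻¹)⁻¹ := by group
      rw [h5]; exact hAnormal.conj_mem ↑a a.2 t⁻¹
    have hmemr : r⁻¹ * ↑a * r ∈ A := by
      have h5 : r⁻¹ * ↑a * r = r⁻¹ * ↑a * (r⁻¹)⁻¹ := by group
      rw [h5]; exact hAnormal.conj_mem ↑a a.2 r⁻¹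
    have hmemw : (t⁻¹ * ↑a * t) * (r⁻¹ * (↑a : H)⁻¹ * r) ∈ A := by
      refine mul_mem hmemt ?_
      have h5 : r⁻¹ * (↑a : H)⁻¹ * r = (r⁻¹ * ↑a * r)⁻¹ := by group
      rw [h5]; exact inv_mem hmemr
    have hsub : (⟨(t⁻¹ * ↑a * t) * (r⁻¹ * (↑a : H)⁻¹ * r), hmemw⟩ : ↥A)
        = ⟨t⁻¹ * ↑a * t, hmemt⟩ * (⟨r⁻¹ * ↑a * r, hmemr⟩ : ↥A)⁻¹ := by
      ext
      show (t⁻¹ * ↑a * t) * (r⁻¹ * (↑a : H)⁻¹ * r) = (t⁻¹ * ↑a * t) * (r⁻¹ * ↑a * r)⁻¹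
      group
    have hμw : μ ⟨(t⁻¹ * ↑a * t) * (r⁻¹ * (↑a : H)⁻¹ * r), hmemw⟩ = 1 := by
      rw [hsub, _root_.map_mul, _root_.map_inv, h1, mul_inv_cancel]
    have hw1 : (t⁻¹ * ↑a * t) * (r⁻¹ * (↑a : H)⁻¹ * r) = 1 :=
      hμZ _ hmemw (heq ▸ hCZ) hμw
    have hCone : C = 1 := by rw [← heq, hw1]
    have hcomm_eq : ⁅(↑a : H)⁻¹, t⁻¹⁆ = ⁅(↑a : H)⁻¹, r⁻¹⁆ := by
      have := hCone
      rw [hC] at this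
      exact mul_inv_eq_one.mp this
    -- convert to the required form
    have h6 : ⁅(↑a : H), t⁻¹⁆ = ⁅(↑a : H), r⁻¹⁆ := by
      have h7 : ⁅(↑a : H), t⁻¹⁆⁻¹ = ⁅(↑a : H), r⁻¹⁆⁻¹ := by
        rw [← comm_inv_left hnil, ← comm_inv_left hnil, hcomm_eq]
      exact inv_injective h7
    calc ⁅(↑a : H), t⁆ = ⁅(↑a : H), (t⁻¹)⁻¹⁆ := by rw [inv_inv]
      _ = ⁅(↑a : H), t⁻¹⁆⁻¹ := comm_inv_right hnil _ _
      _ = ⁅(↑a : H), r⁻¹⁆⁻¹ := by rw [h6]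
      _ = ⁅(↑a : H), (r⁻¹)⁻¹⁆ := (comm_inv_right hnil _ _).symm
      _ = ⁅(↑a : H), r⁆ := by rw [inv_inv]
  
  -- ===== counting =====
  set Zs := (Subgroup.center H).subgroupOf A with hZs
  have hpair_memZ : ∀ (w h : H), ⁅w, h⁆ ∈ Subgroup.center H := comm_mem_center hnil
  set bh : H → (↥A →* ℂˣ) := fun h => MonoidHom.mk'
    (fun a => lam ⟨⁅(↑a : H), h⁆, hpair_memZ _ _⟩)
    (by
      intro a b
      show lam ⟨⁅(↑a * ↑b : H), h⁆, hpair_memZ _ _⟩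
        = lam ⟨⁅(↑a : H), h⁆, hpair_memZ _ _⟩ * lam ⟨⁅(↑b : H), h⁆, hpair_memZ _ _⟩
      rw [← _root_.map_mul]
      congr 1
      ext
      exact comm_mul_left hnil ↑a ↑b h) with hbh
  have hbh_triv : ∀ (h : H), ∀ a ∈ Zs, bh h a = 1 := by
    intro h a ha
    have h1 : ⁅(↑a : H), h⁆ = 1 := commutatorElement_eq_one_iff_commute.mpr
      ((Subgroup.mem_center_iff.mp (Subgroup.mem_subgroupOf.mp ha) h).symm)
    show lam ⟨⁅(↑a : H), h⁆, hpair_memZ _ _⟩ = 1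
    have h2 : (⟨⁅(↑a : H), h⁆, hpair_memZ _ _⟩ : Subgroup.center H) = 1 := by ext; exact h1
    rw [h2, _root_.map_one]
  haveI hZsN : Zs.Normal := inferInstance
  set inj1 : X → ((↥A ⧸ Zs) →* ℂˣ) :=
    fun x => QuotientGroup.lift Zs (bh x.out) (hbh_triv x.out) with hinj1def
  have hinj1 : Function.Injective inj1 := by
    intro x y hxy
    apply hQeq
    intro a
    have h1 : bh x.out a = bh y.out a := by
      have h0 := congrArg (fun f : (↥A ⧸ Zs) →* ℂˣ => f (QuotientGroup.mk a)) hxy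
      exact h0
    have h2 := hlam h1
    exact congrArg Subtype.val h2
  set ph : ↥A → (H →* ℂˣ) := fun a => MonoidHom.mk'
    (fun h => lam ⟨⁅(↑a : H), h⁆, hpair_memZ _ _⟩)
    (by
      intro g h
      show lam ⟨⁅(↑a : H), g * h⁆, hpair_memZ _ _⟩
        = lam ⟨⁅(↑a : H), g⁆, hpair_memZ _ _⟩ * lam ⟨⁅(↑a : H), h⁆, hpair_memZ _ _⟩
      rw [← _root_.map_mul]; congr 1; ext
      exact comm_mul_right hnil ↑a g h) with hph
  have hph_triv : ∀ (a : ↥A), ∀ b ∈ A, ph a b = 1 := by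
    intro a b hb
    have h1 : ⁅(↑a : H), b⁆ = 1 := commutatorElement_eq_one_iff_commute.mpr (habel ↑a a.2 b hb)
    show lam ⟨⁅(↑a : H), b⁆, hpair_memZ _ _⟩ = 1
    have h2 : (⟨⁅(↑a : H), b⁆, hpair_memZ _ _⟩ : Subgroup.center H) = 1 := by ext; exact h1
    rw [h2, _root_.map_one]
  set inj2 : (↥A ⧸ Zs) → (X →* ℂˣ) :=
    fun q => QuotientGroup.lift A (ph q.out) (hph_triv q.out) with hinj2def
  have hinj2 : Function.Injective inj2 := by
    intro q q' hqq
    have h1 : ∀ h : H, ⁅(↑(q.out) : H), h⁆ = ⁅(↑(q'.out) : H), h⁆ := by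
      intro h
      have h2 := congrArg (fun f : X →* ℂˣ => f (QuotientGroup.mk h : X)) hqq
      have h3 : ph q.out h = ph q'.out h := h2
      exact congrArg Subtype.val (hlam h3)
    have h5 : (q.out)⁻¹ * q'.out ∈ Zs := by
      rw [Subgroup.mem_subgroupOf]
      rw [Subgroup.mem_center_iff]
      intro g
      have h6 : ⁅(↑((q.out)⁻¹ * q'.out) : H), g⁆ = 1 := by
        have h7 : (↑((q.out)⁻¹ * q'.out) : H) = (↑(q.out) : H)⁻¹ * ↑(q'.out) := rfl
        rw [h7, comm_mul_left hnil, comm_inv_left hnil, h1 g, inv_mul_cancel]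
      exact ((commutatorElement_eq_one_iff_commute.mp h6)).symm.eq
    have h7 : (QuotientGroup.mk q.out : ↥A ⧸ Zs) = QuotientGroup.mk q'.out :=
      (QuotientGroup.eq).mpr h5
    rwa [QuotientGroup.out_eq', QuotientGroup.out_eq'] at h7
  haveI : Finite (↥A ⧸ Zs) := Quotient.finite _
  letI : CommGroup X :=
    { (inferInstance : Group (H ⧸ A)) with
      mul_comm := by
        intro q1 q2
        induction q1 using QuotientGroup.induction_on with | _ g =>
        induction q2 using QuotientGroup.induction_on with | _ h =>
        show QuotientGroup.mk g * QuotientGroup.mk h = QuotientGroup.mk h * QuotientGroup.mk g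
        rw [← QuotientGroup.mk_mul, ← QuotientGroup.mk_mul]
        refine (QuotientGroup.eq).mpr ?_
        have h9 : (g * h)⁻¹ * (h * g) = ⁅h⁻¹, g⁻¹⁆ := by
          rw [commutatorElement_def]; group
        rw [h9]; exact hZA (comm_mem_center hnil _ _) }
  obtain ⟨E1⟩ := char_group_equiv (↥A ⧸ Zs)
  obtain ⟨E2⟩ := char_group_equiv X
  haveI : Finite ((↥A ⧸ Zs) →* ℂˣ) := Finite.of_equiv _ E1.toEquiv.symm
  haveI : Finite (X →* ℂˣ) := Finite.of_equiv _ E2.toEquiv.symm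
  have hc1 : Nat.card X ≤ Nat.card (↥A ⧸ Zs) := by
    calc Nat.card X ≤ Nat.card ((↥A ⧸ Zs) →* ℂˣ) := Nat.card_le_card_of_injective inj1 hinj1
    _ = Nat.card (↥A ⧸ Zs) := Nat.card_congr E1.toEquiv
  have hc2 : Nat.card (↥A ⧸ Zs) ≤ Nat.card X := by
    calc Nat.card (↥A ⧸ Zs) ≤ Nat.card (X →* ℂˣ) := Nat.card_le_card_of_injective inj2 hinj2
    _ = Nat.card X := Nat.card_congr E2.toEquiv
  have hdd : Nat.card (↥A ⧸ Zs) = d := le_antisymm hc2 hc1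
  have hl1 : Nat.card H = d * Nat.card ↥A :=
    Subgroup.card_eq_card_quotient_mul_card_subgroup A
  have hl2 : Nat.card ↥A = d * Nat.card Zs := by
    rw [← hdd]; exact Subgroup.card_eq_card_quotient_mul_card_subgroup Zs
  have hl3 : Nat.card H = Nat.card (H ⧸ Subgroup.center H) * Nat.card (Subgroup.center H) :=
    Subgroup.card_eq_card_quotient_mul_card_subgroup _
  have hl4 : Nat.card Zs = Nat.card (Subgroup.center H) :=
    Nat.card_congr (Subgroup.subgroupOfEquivOfLe hZA).toEquiv
  have hZpos : 0 < Nat.card (Subgroup.center H) := Nat.card_pos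
  have hd2 : d ^ 2 = Nat.card (H ⧸ Subgroup.center H) := by
    have h8 : d ^ 2 * Nat.card (Subgroup.center H)
        = Nat.card (H ⧸ Subgroup.center H) * Nat.card (Subgroup.center H) := by
      rw [← hl3, hl1, hl2, hl4]; ring
    exact Nat.eq_of_mul_eq_mul_right hZpos h8
  
  -- ===== action of A is diagonal =====
  haveI : Fintype ↥A := Fintype.ofFinite ↥A
  have hmulvec_a : ∀ (a : ↥A) (v : Fin d → ℂ) (i : Fin d),
      (ρ ↑a).mulVec v i = (chi (e.symm i) a : ℂ) * v i := by
    intro a v i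
    have h0 : (ρ ↑a).mulVec v i = ∑ j, ρ ↑a i j * v j := rfl
    rw [h0, Finset.sum_eq_single i]
    · rw [hρval, hfix ↑a a.2 (e.symm i), Equiv.apply_symm_apply, if_pos rfl]
      rfl
    · intro j _ hj
      rw [hρval, hfix ↑a a.2 (e.symm j), Equiv.apply_symm_apply, if_neg (Ne.symm hj), zero_mul]
    · intro h; exact absurd (Finset.mem_univ _) h
  have hmulvec_single : ∀ (g : H) (x : X) (k : Fin d),
      (ρ g).mulVec ((Pi.single (e x) 1 : Fin d → ℂ)) k = if k = e (g • x) then (coc g x : ℂ) else 0 := by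
    intro g x k
    have h0 : (ρ g).mulVec (Pi.single (e x) 1) k = ∑ j, ρ g k j * (Pi.single (e x) 1 : Fin d → ℂ) j := rfl
    rw [h0, Finset.sum_eq_single (e x)]
    · rw [hρval, Equiv.symm_apply_apply, Pi.single_eq_same, mul_one]
    · intro j _ hj
      rw [Pi.single_eq_of_ne hj, mul_zero]
    · intro h; exact absurd (Finset.mem_univ _) h
  -- ===== irreducibility =====
  have hirr : ∀ W : Submodule ℂ (Fin d → ℂ),
      (∀ g : H, ∀ v ∈ W, (ρ g).mulVec v ∈ W) → W = ⊥ ∨ W = ⊤ := by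
    intro W hWinv
    by_cases hbot : W = ⊥
    · exact Or.inl hbot
    right
    obtain ⟨v, hvW, hv0⟩ : ∃ v ∈ W, v ≠ 0 := by
      by_contra hall; push_neg at hall
      exact hbot ((Submodule.eq_bot_iff W).mpr hall)
    obtain ⟨i, hvi⟩ : ∃ i, v i ≠ 0 := Function.ne_iff.mp hv0
    have hsingle_i : (Pi.single i 1 : Fin d → ℂ) ∈ W := by
      set u : Fin d → ℂ :=
        ∑ a : ↥A, ((((chi (e.symm i) a)⁻¹ : ℂˣ)) : ℂ) • (ρ ↑a).mulVec v with hu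
      have huW : u ∈ W :=
        Submodule.sum_mem W (fun a _ => Submodule.smul_mem W _ (hWinv ↑a v hvW))
      have huval : u = (Pi.single i ((Fintype.card ↥A : ℂ) * v i) : Fin d → ℂ) := by
        funext k
        rw [hu, Finset.sum_apply]
        by_cases hk : k = i
        · subst hk
          have hterm : ∀ a : ↥A,
              (((((chi (e.symm k) a)⁻¹ : ℂˣ)) : ℂ) • (ρ ↑a).mulVec v) k = v k := by
            intro a
            rw [Pi.smul_apply, hmulvec_a, smul_eq_mul, ← mul_assoc]
            rw [Units.inv_mul, one_mul]
          rw [Finset.sum_congr rfl (fun a _ => hterm a), Finset.sum_const, Finset.card_univ,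
            Pi.single_eq_same, nsmul_eq_mul]
        · rw [Pi.single_eq_of_ne hk]
          set f : ↥A →* ℂˣ := (chi (e.symm k)) * (chi (e.symm i))⁻¹ with hf
          have hfne : ∃ a, f a ≠ 1 := by
            by_contra hall; push_neg at hall
            have hchieq : chi (e.symm k) = chi (e.symm i) := by
              refine MonoidHom.ext fun a => ?_
              have h3 := hall a
              rw [hf] at h3
              have h4 : ((chi (e.symm k)) a * ((chi (e.symm i)) a)⁻¹ : ℂˣ) = 1 := h3
              exact mul_inv_eq_one.mp h4
            have h6 := congrArg e (hsep _ _ hchieq)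
            rw [Equiv.apply_symm_apply, Equiv.apply_symm_apply] at h6
            exact hk h6
          obtain ⟨a0, ha0⟩ := hfne
          have hsum0 : ∑ a : ↥A, ((f a : ℂˣ) : ℂ) = 0 := char_sum_eq_zero f ha0
          have hterm : ∀ a : ↥A,
              (((((chi (e.symm i) a)⁻¹ : ℂˣ)) : ℂ) • (ρ ↑a).mulVec v) k
              = ((f a : ℂˣ) : ℂ) * v k := by
            intro a
            rw [Pi.smul_apply, hmulvec_a, smul_eq_mul, hf]
            have h5 : ((((chi (e.symm k)) * (chi (e.symm i))⁻¹) a : ℂˣ) : ℂ)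
                = (chi (e.symm k) a : ℂ) * (((chi (e.symm i) a)⁻¹ : ℂˣ) : ℂ) := by
              rw [MonoidHom.mul_apply, MonoidHom.inv_apply, Units.val_mul]
            rw [h5]; ring
          rw [Finset.sum_congr rfl (fun a _ => hterm a), ← Finset.sum_mul, hsum0, zero_mul]
      have hcard0 : (Fintype.card ↥A : ℂ) * v i ≠ 0 :=
        mul_ne_zero (by exact_mod_cast Fintype.card_ne_zero) hvi
      have h1 : (Pi.single i ((Fintype.card ↥A : ℂ) * v i) : Fin d → ℂ) ∈ W := huval ▸ huW
      have h2 : (Pi.single i 1 : Fin d → ℂ)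
          = ((Fintype.card ↥A : ℂ) * v i)⁻¹ • (Pi.single i ((Fintype.card ↥A : ℂ) * v i) : Fin d → ℂ) := by
        funext k
        by_cases hk : k = i
        · subst hk
          rw [Pi.single_eq_same, Pi.smul_apply, Pi.single_eq_same, smul_eq_mul,
            inv_mul_cancel₀ hcard0]
        · rw [Pi.single_eq_of_ne hk, Pi.smul_apply, Pi.single_eq_of_ne hk, smul_zero]
      rw [h2]; exact Submodule.smul_mem W _ h1
    have hsingle_all : ∀ j : Fin d, (Pi.single j 1 : Fin d → ℂ) ∈ W := by
      intro j
      set g : H := (e.symm j).out * ((e.symm i).out)⁻¹ with hg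
      have hgx : g • (e.symm i) = e.symm j := by
        conv_lhs => rw [← QuotientGroup.out_eq' (e.symm i)]
        rw [hsmul_mk, hg]
        have h3 : (e.symm j).out * ((e.symm i).out)⁻¹ * (e.symm i).out = (e.symm j).out := by
          group
        rw [h3, QuotientGroup.out_eq']
      have h4 := hWinv g _ hsingle_i
      have h5 : (ρ g).mulVec ((Pi.single i 1 : Fin d → ℂ)) = (coc g (e.symm i) : ℂ) • (Pi.single j 1 : Fin d → ℂ) := by
        funext k
        have h6 : (Pi.single i 1 : Fin d → ℂ) = (Pi.single (e (e.symm i)) 1 : Fin d → ℂ) := by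
          rw [Equiv.apply_symm_apply]
        rw [h6, hmulvec_single g (e.symm i) k, hgx]
        by_cases hk : k = e (e.symm j)
        · rw [if_pos hk, Pi.smul_apply]
          rw [Equiv.apply_symm_apply] at hk
          subst hk
          rw [Pi.single_eq_same, smul_eq_mul, mul_one]
        · rw [if_neg hk, Pi.smul_apply]
          rw [Equiv.apply_symm_apply] at hk
          rw [Pi.single_eq_of_ne hk, smul_zero]
      rw [h5] at h4
      have h7 : (Pi.single j 1 : Fin d → ℂ)
          = ((coc g (e.symm i) : ℂ))⁻¹ • ((coc g (e.symm i) : ℂ) • (Pi.single j 1 : Fin d → ℂ)) := by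
        rw [smul_smul, inv_mul_cancel₀ (Units.ne_zero _), one_smul]
      rw [h7]; exact Submodule.smul_mem W _ h4
    rw [Submodule.eq_top_iff']
    intro u
    have hdecomp : u = ∑ j : Fin d, u j • (Pi.single j 1 : Fin d → ℂ) := by
      funext k
      rw [Finset.sum_apply, Finset.sum_eq_single k]
      · rw [Pi.smul_apply, Pi.single_eq_same, smul_eq_mul, mul_one]
      · intro j _ hj
        rw [Pi.smul_apply, Pi.single_eq_of_ne (Ne.symm hj), smul_zero]
      · intro h; exact absurd (Finset.mem_univ _) h
    rw [hdecomp]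
    exact Submodule.sum_mem W (fun j _ => Submodule.smul_mem W _ (hsingle_all j))
  -- ===== injectivity =====
  have hmemconj : ∀ (g : H), g ∈ A → ∀ (x : X), x.out⁻¹ * g * x.out ∈ A := by
    intro g hgA x
    have heq2 : x.out⁻¹ * g * x.out = x.out⁻¹ * g * (x.out⁻¹)⁻¹ := by group
    rw [heq2]; exact hAnormal.conj_mem g hgA x.out⁻¹
  have hinj : Function.Injective ρ := by
    refine (injective_iff_map_eq_one ρ).mpr ?_
    intro g hg
    have hfixall : ∀ x : X, g • x = x := by
      intro x
      by_contra hne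
      have h1 : ρ g (e x) (e x) = (1 : Matrix (Fin d) (Fin d) ℂ) (e x) (e x) := by rw [hg]
      rw [hρval, Matrix.one_apply_eq, Equiv.symm_apply_apply] at h1
      rw [if_neg (fun hc => hne (e.injective hc).symm)] at h1
      exact zero_ne_one h1
    have hcocall : ∀ x : X, coc g x = 1 := by
      intro x
      have h1 : ρ g (e x) (e x) = (1 : Matrix (Fin d) (Fin d) ℂ) (e x) (e x) := by rw [hg]
      rw [hρval, Matrix.one_apply_eq, Equiv.symm_apply_apply, hfixall x, if_pos rfl] at h1
      exact Units.val_eq_one.mp h1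
    have hgA : g ∈ A := by
      have h1 : g • (QuotientGroup.mk 1 : X) = QuotientGroup.mk 1 := hfixall _
      rw [hsmul_mk, mul_one] at h1
      have h2 := (QuotientGroup.eq).mp h1
      rw [mul_one] at h2
      exact (Subgroup.inv_mem_iff A).mp h2
    have hμg : μ ⟨g, hgA⟩ = 1 := by
      set x0 : X := QuotientGroup.mk 1 with hx0
      have ht0 : x0.out ∈ A := by
        have h1 : (QuotientGroup.mk x0.out : X) = QuotientGroup.mk 1 := by
          rw [QuotientGroup.out_eq']
        have h2 := (QuotientGroup.eq).mp h1
        rw [mul_one] at h2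
        exact (Subgroup.inv_mem_iff A).mp h2
      have h3 := hcocall x0
      have h4 : μ ⟨x0.out⁻¹ * g * x0.out, hmemconj g hgA x0⟩ = 1 := by
        rw [← hcoc_A ⟨g, hgA⟩ x0]; exact h3
      have h5 : x0.out⁻¹ * g * x0.out = g := by
        have hcomm : g * x0.out = x0.out * g := habel g hgA x0.out ht0
        calc x0.out⁻¹ * g * x0.out = x0.out⁻¹ * (g * x0.out) := by group
          _ = x0.out⁻¹ * (x0.out * g) := by rw [hcomm]
          _ = g := by group
      have h6 : (⟨x0.out⁻¹ * g * x0.out, hmemconj g hgA x0⟩ : ↥A) = ⟨g, hgA⟩ := by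
        ext; exact h5
      rw [h6] at h4; exact h4
    have hgZ : g ∈ Subgroup.center H := by
      rw [Subgroup.mem_center_iff]
      intro h
      set x : X := QuotientGroup.mk h with hx
      have h3 := hcocall x
      have h4 : μ ⟨x.out⁻¹ * g * x.out, hmemconj g hgA x⟩ = 1 := by
        rw [← hcoc_A ⟨g, hgA⟩ x]; exact h3
      set zc : H := ⁅g⁻¹, x.out⁻¹⁆ with hzc
      have hzcZ : zc ∈ Subgroup.center H := comm_mem_center hnil _ _
      have hzcA : zc ∈ A := hZA hzcZ
      have h5 : x.out⁻¹ * g * x.out = g * zc := by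
        rw [hzc]; simp only [commutatorElement_def]; group
      have h6 : (⟨x.out⁻¹ * g * x.out, hmemconj g hgA x⟩ : ↥A)
          = ⟨g, hgA⟩ * ⟨zc, hzcA⟩ := by
        ext; exact h5
      rw [h6, _root_.map_mul, hμg, one_mul] at h4
      have h7 : zc = 1 := hμZ zc hzcA hzcZ h4
      have h8 : Commute g⁻¹ x.out⁻¹ := commutatorElement_eq_one_iff_commute.mp (hzc ▸ h7)
      have h9 : Commute g x.out := by simpa using h8.inv_inv
      have h10 : x.out⁻¹ * h ∈ A := by
        have h11 : (QuotientGroup.mk x.out : X) = QuotientGroup.mk h := by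
          rw [QuotientGroup.out_eq']
        exact (QuotientGroup.eq).mp h11
      have h11 : Commute g (x.out⁻¹ * h) := habel g hgA _ h10
      have h12 : Commute g h := by
        have h13 := h9.mul_right h11
        have h14 : x.out * (x.out⁻¹ * h) = h := by group
        rwa [h14] at h13
      exact h12.eq.symm
    exact hμZ g hgA hgZ hμg
  exact ⟨d, ρ, hinj, hirr, hd2⟩
end CharExt
end

section
/- Let n ≥ 3 and H_n = ⟨τ, α⟩ ≤ Sym(ℤ/2^nℤ) with τ : x ↦ x+1 and α : x ↦ 5x mod 2^n. Then the center of H_n equals ⟨τ^{2^{n-2}}⟩, a cyclic group of order 4. -/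
def tauPerm (n : ℕ) : Equiv.Perm (ZMod (2 ^ n)) := Equiv.addLeft 1

def alphaPerm (n : ℕ) : Equiv.Perm (ZMod (2 ^ n)) :=
  MulAction.toPerm (ZMod.unitOfCoprime 5 (Nat.Coprime.pow_right n (by norm_num : Nat.Coprime 5 2)))

def Hgrp (n : ℕ) : Subgroup (Equiv.Perm (ZMod (2 ^ n))) :=
  Subgroup.closure {tauPerm n, alphaPerm n}

lemma tau_apply (n : ℕ) (x : ZMod (2^n)) : tauPerm n x = 1 + x := rfl

lemma alpha_apply (n : ℕ) (x : ZMod (2^n)) : alphaPerm n x = 5 * x := by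
  simp [alphaPerm, MulAction.toPerm, Units.smul_def, ZMod.coe_unitOfCoprime]

lemma tau_pow (n k : ℕ) : (tauPerm n)^k = Equiv.addLeft (k : ZMod (2^n)) := by
  induction k with
  | zero => ext x; simp
  | succ k ih =>
    rw [pow_succ, ih]; ext x
    simp [tau_apply, Equiv.Perm.mul_apply]
    

lemma addLeft_eq_one_iff (n : ℕ) (a : ZMod (2^n)) : Equiv.addLeft a = 1 ↔ a = 0 := by
  constructor
  · intro h
    have := Equiv.ext_iff.mp h 0
    simpa using this
  · rintro rfl; ext x; simp

lemma affine_of_comm_tau (n : ℕ) (g : Equiv.Perm (ZMod (2^n)))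
    (h : tauPerm n * g = g * tauPerm n) : g = Equiv.addLeft (g 0) := by
  haveI : NeZero (2^n) := ⟨pow_ne_zero n two_ne_zero⟩
  have key : ∀ m : ℕ, g (m : ZMod (2^n)) = g 0 + m := by
    intro m; induction m with
    | zero => simp
    | succ m ih =>
      have h2 := Equiv.ext_iff.mp h (m : ZMod (2^n))
      simp only [Equiv.Perm.mul_apply, tau_apply] at h2
      push_cast
      rw [show ((m:ZMod (2^n)) + 1) = 1 + m by ring, ← h2, ih]; ring
  ext x
  obtain ⟨m, rfl⟩ := ZMod.natCast_zmod_surjective x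
  simp [key m, add_comm]

lemma tau_mem (n : ℕ) : tauPerm n ∈ Hgrp n :=
  Subgroup.subset_closure (by left; rfl)

lemma alpha_mem (n : ℕ) : alphaPerm n ∈ Hgrp n :=
  Subgroup.subset_closure (by right; rfl)

lemma central_of_comm (n : ℕ) (g : Equiv.Perm (ZMod (2^n))) (hg : g ∈ Hgrp n)
    (h1 : tauPerm n * g = g * tauPerm n) (h2 : alphaPerm n * g = g * alphaPerm n) :
    (⟨g, hg⟩ : Hgrp n) ∈ Subgroup.center (Hgrp n) := by
  rw [Subgroup.mem_center_iff]
  rintro ⟨h, hh⟩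
  ext : 1
  show h * g = g * h
  refine Subgroup.closure_induction (fun x hx => ?_) (by simp) (fun a b _ _ ha hb => by
    rw [mul_assoc, hb, ← mul_assoc, ha, mul_assoc]) (fun a _ ha => ?_) hh
  · rcases hx with rfl | rfl
    · exact h1
    · exact h2
  · exact (Commute.inv_left ha : _)

theorem Hgrp_center (n : ℕ) (hn : 3 ≤ n) :
    Subgroup.map (Hgrp n).subtype (Subgroup.center (Hgrp n)) =
      Subgroup.zpowers ((tauPerm n) ^ (2 ^ (n - 2))) ∧
    Nat.card (Subgroup.center (Hgrp n)) = 4 := by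
  haveI : NeZero (2^n) := ⟨pow_ne_zero n two_ne_zero⟩
  have e2 : 2^(n-2) * 2 = 2^(n-1) := by rw [← pow_succ]; congr 1; omega
  have e4 : 2^(n-2) * 4 = 2^n := by
    rw [show (4:ℕ) = 2^2 from rfl, ← pow_add]; congr 1; omega
  have hc4 : (4 : ZMod (2^n)) * ((2^(n-2) : ℕ) : ZMod (2^n)) = 0 := by
    have h := congrArg (Nat.cast : ℕ → ZMod (2^n)) e4
    rw [Nat.cast_mul, ZMod.natCast_self] at h
    rw [mul_comm]
    simpa using h
  have hc5 : (5 : ZMod (2^n)) * ((2^(n-2) : ℕ) : ZMod (2^n)) = ((2^(n-2) : ℕ) : ZMod (2^n)) := by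
    have h5 : (5 : ZMod (2^n)) = 1 + 4 := by norm_num
    rw [h5, add_mul, one_mul, hc4, add_zero]
  have hcomm_alpha : alphaPerm n * (tauPerm n)^(2^(n-2)) = (tauPerm n)^(2^(n-2)) * alphaPerm n := by
    rw [tau_pow]; ext x
    simp only [Equiv.Perm.mul_apply, Equiv.coe_addLeft, alpha_apply]
    rw [mul_add, hc5]
  have hgen_mem : (tauPerm n)^(2^(n-2)) ∈ Hgrp n := pow_mem (tau_mem n) _
  have hgen_central : (⟨(tauPerm n)^(2^(n-2)), hgen_mem⟩ : Hgrp n) ∈ Subgroup.center (Hgrp n) :=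
    central_of_comm n _ hgen_mem ((Commute.refl (tauPerm n)).pow_right _) hcomm_alpha
  have hmap : Subgroup.map (Hgrp n).subtype (Subgroup.center (Hgrp n)) =
      Subgroup.zpowers ((tauPerm n) ^ (2 ^ (n - 2))) := by
    apply le_antisymm
    · rintro g ⟨⟨g, hg⟩, hgc, rfl⟩
      replace hgc := Subgroup.mem_center_iff.mp hgc
      have h1 : tauPerm n * g = g * tauPerm n :=
        Subtype.ext_iff.mp (hgc ⟨tauPerm n, tau_mem n⟩)
      have h2 : alphaPerm n * g = g * alphaPerm n :=
        Subtype.ext_iff.mp (hgc ⟨alphaPerm n, alpha_mem n⟩)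
      have hg0 : g = Equiv.addLeft (g 0) := affine_of_comm_tau n g h1
      set c := g 0 with hc
      have h4c : (4 : ZMod (2^n)) * c = 0 := by
        have h0 := Equiv.ext_iff.mp h2 0
        simp only [Equiv.Perm.mul_apply, alpha_apply, mul_zero] at h0
        linear_combination h0
      have hdvd : 2^(n-2) ∣ c.val := by
        have hz : ((4 * c.val : ℕ) : ZMod (2^n)) = 0 := by
          push_cast
          rw [ZMod.natCast_val, ZMod.cast_id, h4c]
        rw [ZMod.natCast_eq_zero_iff] at hz
        have hz2 : 4 * 2^(n-2) ∣ 4 * c.val := by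
          rw [mul_comm 4 (2^(n-2)), e4]; exact hz
        exact (Nat.mul_dvd_mul_iff_left (by norm_num : 0 < 4)).mp hz2
      obtain ⟨m, hm⟩ := hdvd
      show g ∈ Subgroup.zpowers _
      rw [Subgroup.mem_zpowers_iff]
      refine ⟨m, ?_⟩
      rw [zpow_natCast, ← pow_mul, ← hm, tau_pow, hg0]
      congr 1
      rw [ZMod.natCast_val, ZMod.cast_id]
    · rw [Subgroup.zpowers_le]
      exact ⟨⟨(tauPerm n)^(2^(n-2)), hgen_mem⟩, hgen_central, rfl⟩
  refine ⟨hmap, ?_⟩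
  have hcard1 : Nat.card (Subgroup.center (Hgrp n)) =
      Nat.card (Subgroup.map (Hgrp n).subtype (Subgroup.center (Hgrp n))) :=
    Nat.card_congr (Subgroup.equivMapOfInjective _ _ (Subgroup.subtype_injective _)).toEquiv
  rw [hcard1, hmap, Nat.card_zpowers]
  have hne : ((tauPerm n)^(2^(n-2)))^(2^1) ≠ 1 := by
    rw [← pow_mul, pow_one, e2, tau_pow]
    intro h
    rw [addLeft_eq_one_iff, ZMod.natCast_eq_zero_iff] at h
    have h1 := Nat.le_of_dvd (by positivity) h
    have h2 := Nat.pow_lt_pow_right one_lt_two (show n - 1 < n by omega)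
    omega
  have heq : ((tauPerm n)^(2^(n-2)))^(2^(1+1)) = 1 := by
    rw [← pow_mul, show (2:ℕ)^(1+1) = 4 from rfl, e4, tau_pow, ZMod.natCast_self,
      addLeft_eq_one_iff]
  exact orderOf_eq_prime_pow hne heq
end

section
/- Let n ≥ 5 and H_n = ⟨τ, α⟩ ≤ Sym(ℤ/2^nℤ) with τ : x ↦ x+1 and α : x ↦ 5x mod 2^n, and let Z = Z(H_n) = ⟨τ^{2^{n-2}}⟩. Then the quotient H_n/Z is nonabelian. -/
theorem Hgrp_quotient_center_nonabelian (n : ℕ) (hn : 5 ≤ n) :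
    ∃ a b : (Hgrp n) ⧸ Subgroup.center (Hgrp n), a * b ≠ b * a := by
  set u : (ZMod (2 ^ n))ˣ :=
    ZMod.unitOfCoprime 5 (Nat.Coprime.pow_right n (by norm_num : Nat.Coprime 5 2)) with hu
  have huval : (u : ZMod (2 ^ n)) = 5 := by
    simp [hu, ZMod.coe_unitOfCoprime]
  set τ' : Hgrp n := ⟨tauPerm n, Subgroup.subset_closure (Set.mem_insert _ _)⟩ with hτ
  set α' : Hgrp n := ⟨alphaPerm n, Subgroup.subset_closure (Set.mem_insert_of_mem _ rfl)⟩ with hα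
  refine ⟨QuotientGroup.mk τ', QuotientGroup.mk α', ?_⟩
  intro hcom
  rw [← QuotientGroup.mk_mul, ← QuotientGroup.mk_mul, QuotientGroup.eq] at hcom
  have key := (Subgroup.mem_center_iff.mp hcom) α'
  have key2 : ((α' * ((τ' * α')⁻¹ * (α' * τ')) : Hgrp n) : Equiv.Perm (ZMod (2 ^ n))) 0
      = ((((τ' * α')⁻¹ * (α' * τ')) * α' : Hgrp n) : Equiv.Perm (ZMod (2 ^ n))) 0 := by
    rw [key]
  simp only [hτ, hα, Subgroup.coe_mul, Subgroup.coe_inv, mul_inv_rev,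
    Equiv.Perm.mul_apply, Equiv.symm_apply_apply, tauPerm, alphaPerm, ← hu,
    Equiv.coe_addLeft, MulAction.toPerm_apply, Equiv.Perm.inv_def,
    Equiv.addLeft_symm, MulAction.toPerm_symm_apply, smul_eq_mul, huval] at key2
  have key3 := congrArg (fun x => u • x) key2
  simp only [smul_inv_smul, Units.smul_def, huval, smul_eq_mul, mul_zero, add_zero,
    mul_one] at key3
  have hv : (5 : ZMod (2 ^ n)) * ↑u⁻¹ = 1 := by rw [← huval]; exact u.mul_inv
  have h16 : ((16 : ℕ) : ZMod (2 ^ n)) = 0 := by push_cast; linear_combination key3 - 16 * hv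
  have hdvd : 2 ^ n ∣ 16 := (ZMod.natCast_eq_zero_iff 16 (2 ^ n)).mp h16
  have hle : 2 ^ n ≤ 16 := Nat.le_of_dvd (by norm_num) hdvd
  have : (32 : ℕ) ≤ 2 ^ n := by
    calc (32 : ℕ) = 2 ^ 5 := by norm_num
    _ ≤ 2 ^ n := Nat.pow_le_pow_right (by norm_num) hn
  omega
end

section
/- Let n ≥ 3 and H_n = ⟨τ, α⟩ with τ : x ↦ x+1 and α : x ↦ 5x mod 2^n. Then H_n is of central type: for every element a ∈ H_n not in the center Z = ⟨τ^{2^{n-2}}⟩, the conjugacy class of a contains two distinct elements that are congruent modulo Z. -/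
namespace CTaux

variable {n : ℕ}

instance : NeZero ((2:ℕ) ^ n) := ⟨pow_ne_zero n (by norm_num)⟩

/-- the distinguished central translation amount -/
def T (n : ℕ) : ZMod (2 ^ n) := ((2 ^ (n - 1) : ℕ) : ZMod (2 ^ n))

/-- the distinguished central permutation -/
def zc (n : ℕ) : Equiv.Perm (ZMod (2 ^ n)) := Equiv.addLeft (T n)

lemma T_ne_zero (hn : 3 ≤ n) : T n ≠ 0 := by
  simp only [T, Ne, ZMod.natCast_eq_zero_iff]
  intro h
  have h1 := Nat.le_of_dvd (by positivity) h
  have h2 : (2:ℕ) ^ (n-1) < 2 ^ n := Nat.pow_lt_pow_right (by norm_num) (by omega)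
  omega

lemma odd_mul (hn : 1 ≤ n) {t : ℕ} (ht : t % 2 = 1) :
    ((2 ^ (n - 1) * t : ℕ) : ZMod (2 ^ n)) = T n := by
  obtain ⟨m, rfl⟩ : ∃ m, n = m + 1 := ⟨n - 1, by omega⟩
  obtain ⟨r, rfl⟩ : ∃ r, t = 2 * r + 1 := ⟨t / 2, by omega⟩
  have h1 : (2:ℕ) ^ (m + 1 - 1) * (2 * r + 1) = 2 ^ (m+1) * r + 2 ^ (m + 1 - 1) := by
    simp only [Nat.add_sub_cancel]; ring
  rw [h1, Nat.cast_add, Nat.cast_mul, ZMod.natCast_self, zero_mul, zero_add]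
  rfl

lemma four_mul_T (hn : 3 ≤ n) : (4 : ZMod (2 ^ n)) * T n = 0 := by
  have h : ((4 * 2 ^ (n-1) : ℕ) : ZMod (2 ^ n)) = 0 := by
    rw [ZMod.natCast_eq_zero_iff]
    obtain ⟨m, rfl⟩ : ∃ m, n = m + 1 := ⟨n - 1, by omega⟩
    have : 4 * 2 ^ (m + 1 - 1) = 2 ^ (m + 2) := by
      simp only [Nat.add_sub_cancel]; rw [pow_succ, pow_succ]; ring
    rw [this]
    exact pow_dvd_pow 2 (by omega)
  push_cast at h
  simpa [T] using h

lemma u_mul_T (hn : 3 ≤ n) {u v : ZMod (2 ^ n)} (huv : u = 1 + 4 * v) :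
    u * T n = T n := by
  rw [huv]
  have h4 := four_mul_T (n := n) hn
  linear_combination v * h4

/-- every element of `Hgrp n` is affine `x ↦ u x + c` with `u ≡ 1 mod 4` -/
lemma isAff_of_mem {f : Equiv.Perm (ZMod (2 ^ n))} (hf : f ∈ Hgrp n) :
    ∃ (u : (ZMod (2 ^ n))ˣ) (c v : ZMod (2 ^ n)),
      (u : ZMod (2 ^ n)) = 1 + 4 * v ∧ ∀ x, f x = u * x + c := by
  induction hf using Subgroup.closure_induction with
  | mem g hg =>
    rcases hg with hg | hg
    · subst hg
      exact ⟨1, 1, 0, by simp, fun x => by simp [tauPerm, add_comm]⟩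
    · subst hg
      refine ⟨ZMod.unitOfCoprime 5 (Nat.Coprime.pow_right n (by norm_num)), 0, 1, ?_, ?_⟩
      · rw [ZMod.coe_unitOfCoprime]; push_cast; ring
      · intro x
        simp [alphaPerm, Units.smul_def, ZMod.coe_unitOfCoprime]
  | one => exact ⟨1, 0, 0, by simp, fun x => by simp⟩
  | mul f g _ _ ihf ihg =>
    obtain ⟨u, c, v, huv, hfx⟩ := ihf
    obtain ⟨u', c', v', huv', hgx⟩ := ihg
    refine ⟨u * u', u * c' + c, v + v' + 4 * v * v', ?_, ?_⟩
    · rw [Units.val_mul, huv, huv']; ring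
    · intro x
      simp only [Equiv.Perm.mul_apply, hfx, hgx, Units.val_mul]
      ring
  | inv f _ ihf =>
    obtain ⟨u, c, v, huv, hfx⟩ := ihf
    refine ⟨u⁻¹, -(↑u⁻¹ * c), -(v * ↑u⁻¹), ?_, ?_⟩
    · have h1 : ((u : ZMod (2 ^ n))) * ↑u⁻¹ = 1 := u.mul_inv
      rw [huv] at h1
      linear_combination h1
    · intro x
      have h2 : f (f⁻¹ x) = x := Equiv.apply_symm_apply f x
      rw [hfx (f⁻¹ x)] at h2
      have h3 : (↑u⁻¹ : ZMod (2 ^ n)) * ↑u = 1 := u.inv_mul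
      calc f⁻¹ x = (↑u⁻¹ * ↑u) * f⁻¹ x := by rw [h3, one_mul]
        _ = ↑u⁻¹ * (↑u * f⁻¹ x + c) + -(↑u⁻¹ * c) := by ring
        _ = ↑u⁻¹ * x + -(↑u⁻¹ * c) := by rw [h2]

lemma tau_mem : tauPerm n ∈ Hgrp n :=
  Subgroup.subset_closure (Set.mem_insert _ _)

lemma alpha_mem : alphaPerm n ∈ Hgrp n :=
  Subgroup.subset_closure (Set.mem_insert_of_mem _ rfl)

lemma tau_pow (m : ℕ) : (tauPerm n) ^ m = Equiv.addLeft ((m : ZMod (2 ^ n))) := by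
  induction m with
  | zero => ext x; simp [tauPerm]
  | succ k ih =>
    rw [pow_succ, ih]
    ext x
    simp only [Equiv.Perm.mul_apply, Equiv.coe_addLeft, tauPerm]
    push_cast
    ring

lemma addLeft_mem (t : ZMod (2 ^ n)) : Equiv.addLeft t ∈ Hgrp n := by
  have h : Equiv.addLeft t = (tauPerm n) ^ (t.val) := by
    rw [tau_pow, ZMod.natCast_rightInverse t]
  rw [h]
  exact pow_mem tau_mem _

lemma zc_mem : zc n ∈ Hgrp n := addLeft_mem _

lemma alpha_pow_apply (j : ℕ) : ∀ x : ZMod (2 ^ n),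
    ((alphaPerm n) ^ j) x = 5 ^ j * x := by
  induction j with
  | zero => intro x; simp
  | succ k ih =>
    intro x
    rw [pow_succ, Equiv.Perm.mul_apply, ih]
    simp only [alphaPerm, MulAction.toPerm_apply, Units.smul_def, ZMod.coe_unitOfCoprime,
      nsmul_eq_mul, smul_eq_mul]
    push_cast
    ring

lemma zc_comm (hn : 3 ≤ n) {f : Equiv.Perm (ZMod (2 ^ n))} (hf : f ∈ Hgrp n) :
    f * zc n = zc n * f := by
  obtain ⟨u, c, v, huv, hfx⟩ := isAff_of_mem hf
  ext x
  simp only [Equiv.Perm.mul_apply, zc, Equiv.coe_addLeft, hfx]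
  rw [mul_add, u_mul_T hn huv]
  ring

lemma zc_center (hn : 3 ≤ n) :
    (⟨zc n, zc_mem⟩ : Hgrp n) ∈ Subgroup.center (Hgrp n) := by
  rw [Subgroup.mem_center_iff]
  intro g
  exact Subtype.ext (zc_comm hn g.2)

lemma exists_factor {d : ZMod (2 ^ n)} (hd : d ≠ 0) :
    ∃ s t : ℕ, s < n ∧ t % 2 = 1 ∧ d = ((2 ^ s * t : ℕ) : ZMod (2 ^ n)) := by
  have hval : d.val ≠ 0 := by
    intro h
    exact hd ((ZMod.val_eq_zero d).mp h)
  refine ⟨(d.val).factorization 2, d.val / 2 ^ ((d.val).factorization 2), ?_, ?_, ?_⟩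
  · by_contra hcon
    have h1 : (2:ℕ) ^ ((d.val).factorization 2) ∣ d.val := Nat.ordProj_dvd _ _
    have h2 := Nat.le_of_dvd (Nat.pos_of_ne_zero hval) h1
    have h3 : d.val < 2 ^ n := ZMod.val_lt d
    have h4 : (2:ℕ) ^ n ≤ 2 ^ ((d.val).factorization 2) :=
      Nat.pow_le_pow_right (by norm_num) (by omega)
    omega
  · have h5 := Nat.not_dvd_ordCompl Nat.prime_two hval
    omega
  · rw [Nat.ordProj_mul_ordCompl_eq_self d.val 2]
    exact (ZMod.natCast_rightInverse d).symm

lemma five_pow_nat (m : ℕ) : ∃ t : ℕ, t % 2 = 1 ∧ 5 ^ (2 ^ m) = 1 + 2 ^ (m + 2) * t := by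
  induction m with
  | zero => exact ⟨1, rfl, by norm_num⟩
  | succ k ih =>
    obtain ⟨t, ht, h⟩ := ih
    refine ⟨t + 2 ^ (k + 1) * t ^ 2, ?_, ?_⟩
    · obtain ⟨w, hw⟩ : (2:ℕ) ∣ 2 ^ (k + 1) * t ^ 2 :=
        Dvd.dvd.mul_right (dvd_pow_self 2 (Nat.succ_ne_zero k)) _
      omega
    · have h1 : (5:ℕ) ^ (2 ^ (k + 1)) = (5 ^ (2 ^ k)) ^ 2 := by
        rw [← pow_mul, pow_succ]
      rw [h1, h]
      ring

lemma odd_unit_exists {t : ℕ} (ht : t % 2 = 1) :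
    ∃ e : ZMod (2 ^ n), e * (t : ZMod (2 ^ n)) = 1 := by
  have hcop : Nat.Coprime t (2 ^ n) :=
    Nat.Coprime.pow_right n
      (((Nat.Prime.coprime_iff_not_dvd Nat.prime_two).mpr (by omega)).symm)
  exact ⟨↑(ZMod.unitOfCoprime t hcop)⁻¹, by
    rw [← ZMod.coe_unitOfCoprime t hcop, ← Units.val_mul, inv_mul_cancel, Units.val_one]⟩

end CTaux

open CTaux
theorem Hgrp_central_type_criterion (n : ℕ) (hn : 3 ≤ n) :
    ∀ a : Hgrp n, a ∉ Subgroup.center (Hgrp n) →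
      ∃ b c : Hgrp n, IsConj a b ∧ IsConj a c ∧ b ≠ c ∧
        (b : (Hgrp n) ⧸ Subgroup.center (Hgrp n)) = (c : (Hgrp n) ⧸ Subgroup.center (Hgrp n)) := by
  intro a ha
  obtain ⟨u, c, v, huv, hax⟩ := isAff_of_mem a.2
  -- find G in Hgrp with G ∘ a = zc ∘ a ∘ G
  have key : ∃ G : Equiv.Perm (ZMod (2 ^ n)), G ∈ Hgrp n ∧
      G * (a : Equiv.Perm (ZMod (2 ^ n))) = zc n * (a : Equiv.Perm (ZMod (2 ^ n))) * G := by
    by_cases hu : (u : ZMod (2 ^ n)) = 1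
    · -- a is a translation; show 4c ≠ 0 and use a power of alpha
      have h4c : 4 * c ≠ 0 := by
        intro h4
        apply ha
        rw [Subgroup.mem_center_iff]
        intro g
        obtain ⟨u', c', v', huv', hgx⟩ := isAff_of_mem g.2
        apply Subtype.ext
        ext x
        show (g : Equiv.Perm (ZMod (2 ^ n))) ((a : Equiv.Perm (ZMod (2 ^ n))) x)
          = (a : Equiv.Perm (ZMod (2 ^ n))) ((g : Equiv.Perm (ZMod (2 ^ n))) x)
        simp only [hax, hgx, hu]
        rw [huv']
        linear_combination v' * h4
      have hc0 : c ≠ 0 := by intro h; exact h4c (by rw [h, mul_zero])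
      obtain ⟨s, t, hsn, ht, hc⟩ := exists_factor hc0
      have hs3 : s + 3 ≤ n := by
        by_contra hcon
        apply h4c
        rw [hc]
        have : ((4 * (2 ^ s * t) : ℕ) : ZMod (2 ^ n)) = 0 := by
          rw [ZMod.natCast_eq_zero_iff]
          have h1 : 4 * (2 ^ s * t) = 2 ^ (s + 2) * t := by rw [pow_succ, pow_succ]; ring
          rw [h1]
          exact Dvd.dvd.mul_right (pow_dvd_pow 2 (by omega)) t
        push_cast at this ⊢
        linear_combination this
      obtain ⟨t', ht', h5⟩ := five_pow_nat (n - 3 - s)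
      refine ⟨(alphaPerm n) ^ (2 ^ (n - 3 - s)), pow_mem alpha_mem _, ?_⟩
      ext x
      simp only [Equiv.Perm.mul_apply, alpha_pow_apply, hax, hu, one_mul, zc,
        Equiv.coe_addLeft]
      -- 5^j * (x + c) = T + (5^j x + c), i.e. (5^j - 1) c = T
      have h5' : ((5:ZMod (2 ^ n)) ^ (2 ^ (n - 3 - s))) = 1 + 2 ^ ((n - 3 - s) + 2) * t' := by
        have := congrArg (Nat.cast : ℕ → ZMod (2 ^ n)) h5
        push_cast at this
        exact this
      have hTc : ((2:ZMod (2 ^ n)) ^ ((n - 3 - s) + 2) * t') * c = T n := by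
        rw [hc]
        have hcast : ((2 ^ ((n - 3 - s) + 2) * t' * (2 ^ s * t) : ℕ) : ZMod (2 ^ n)) = T n := by
          have hexp : (n - 3 - s + 2) + s = n - 1 := by omega
          have harr : 2 ^ ((n - 3 - s) + 2) * t' * (2 ^ s * t) = 2 ^ (n - 1) * (t' * t) := by
            calc 2 ^ (n - 3 - s + 2) * t' * (2 ^ s * t)
                = 2 ^ ((n - 3 - s + 2) + s) * (t' * t) := by rw [pow_add]; ring
              _ = 2 ^ (n - 1) * (t' * t) := by rw [hexp]
          rw [harr]
          exact odd_mul (by omega) (by rw [Nat.mul_mod, ht', ht])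
        push_cast at hcast ⊢
        linear_combination hcast
      rw [h5']
      linear_combination hTc
    · -- u ≠ 1: conjugate by a translation
      have hd : (1 : ZMod (2 ^ n)) - u ≠ 0 := fun h => hu (by linear_combination -h)
      obtain ⟨s, t, hsn, ht, hd'⟩ := exists_factor hd
      obtain ⟨e, he⟩ := odd_unit_exists (n := n) ht
      set k : ZMod (2 ^ n) := ((2 ^ (n - 1 - s) : ℕ) : ZMod (2 ^ n)) * e with hk
      have hkd : k * (1 - u) = T n := by
        rw [hd', hk]
        have hcast : ((2 ^ (n - 1 - s) * (2 ^ s * t) : ℕ) : ZMod (2 ^ n)) =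
            T n * t := by
          have harr : 2 ^ (n - 1 - s) * (2 ^ s * t) = 2 ^ (n - 1) * t := by
            rw [← mul_assoc, ← pow_add]
            congr 2
            omega
          rw [harr]
          push_cast [T]
          ring
        push_cast at hcast ⊢
        calc ((2:ZMod (2^n)) ^ (n - 1 - s) * e) * (2 ^ s * t)
            = (2 ^ (n - 1 - s) * (2 ^ s * t)) * e := by ring
          _ = (T n * t) * e := by rw [hcast]
          _ = T n * (e * t) := by ring
          _ = T n := by rw [he, mul_one]
      refine ⟨Equiv.addLeft k, addLeft_mem k, ?_⟩
      ext x
      simp only [Equiv.Perm.mul_apply, Equiv.coe_addLeft, hax, zc]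
      -- k + (u x + c) = T + (u (k + x) + c), i.e. k (1 - u) = T
      linear_combination hkd
  obtain ⟨G, hG, hGa⟩ := key
  have hzcmem : zc n * (a : Equiv.Perm (ZMod (2 ^ n))) ∈ Hgrp n := mul_mem zc_mem a.2
  refine ⟨a, ⟨zc n * ↑a, hzcmem⟩, IsConj.refl a, ?_, ?_, ?_⟩
  · rw [isConj_iff]
    refine ⟨⟨G, hG⟩, ?_⟩
    apply Subtype.ext
    show G * ↑a * G⁻¹ = zc n * ↑a
    rw [hGa]
    group
  · intro hcon
    have h1 : (a : Equiv.Perm (ZMod (2 ^ n))) = zc n * ↑a := congrArg Subtype.val hcon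
    have h2 : (1 : Equiv.Perm (ZMod (2 ^ n))) = zc n :=
      mul_right_cancel (b := (a : Equiv.Perm (ZMod (2 ^ n)))) (by rw [one_mul, ← h1])
    have h3 := congrArg (fun f : Equiv.Perm (ZMod (2 ^ n)) => f 0) h2
    simp only [zc, Equiv.coe_addLeft, add_zero, Equiv.Perm.one_apply] at h3
    exact T_ne_zero hn h3.symm
  · rw [QuotientGroup.eq]
    have hc := (Subgroup.mem_center_iff.mp (zc_center hn)) a⁻¹
    have : a⁻¹ * (⟨zc n * ↑a, hzcmem⟩ : Hgrp n) = ⟨zc n, zc_mem⟩ := by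
      have hsplit : (⟨zc n * ↑a, hzcmem⟩ : Hgrp n) = ⟨zc n, zc_mem⟩ * a := by
        apply Subtype.ext; rfl
      rw [hsplit, ← mul_assoc, hc, mul_assoc, inv_mul_cancel, mul_one]
    rw [this]
    exact zc_center hn
end
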